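/- arXiv:2501.11021 — 8 statements merged into one kernel-verified Lean document; each statement's English description precedes it below -/
import Mathlib

section
/- Suppose n is odd and p, q ≥ 1 are integers with p ≡ q (mod n+1). Then the cokernels G_{n,p} = ℤ^n / Im(1 + (−1)^{p+1} φ^p) and G_{n,q} = ℤ^n / Im(1 + (−1)^{q+1} φ^q) are isomorphic as abelian groups; in fact Im(1 + (−1)^{p+1} φ^p) = Im(1 + (−1)^{q+1} φ^q). -/
/-- The Coxeter transformation of the linearly oriented Dynkin quiver `A_n`, acting on
`ℤ^n = K_0(D^b(mod K A_n))` in the basis of classes of simple modules: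
`φ(e_i) = e_{i+1}` for `1 ≤ i ≤ n-1` and `φ(e_n) = -(e_1 + ⋯ + e_n)`.
(Here the basis vector `e_i` is `Pi.single ⟨i-1, _⟩ 1`.) -/
noncomputable def phiA (n : ℕ) : Module.End ℤ (Fin n → ℤ) :=
  (Pi.basisFun ℤ (Fin n)).constr ℤ (fun i =>
    if h : (i : ℕ) + 1 < n then Pi.single (⟨(i : ℕ) + 1, h⟩ : Fin n) 1 else fun _ => -1)

lemma phiA_single {n : ℕ} (i : Fin n) :
    phiA n (Pi.single i 1) =
      if h : (i : ℕ) + 1 < n then Pi.single (⟨(i : ℕ) + 1, h⟩ : Fin n) 1 else fun _ => -1 := by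
  rw [← Pi.basisFun_apply ℤ (Fin n) i]
  exact Module.Basis.constr_basis _ _ _ _

lemma sum_singles (m : ℕ) : ∑ i : Fin (m+1), Pi.single i (1:ℤ) = fun _ => 1 :=
  Finset.univ_sum_single _

lemma phiA_neg_ones (m : ℕ) :
    phiA (m+1) (fun _ => (-1:ℤ)) = Pi.single (0 : Fin (m+1)) 1 := by
  have hfun : (fun _ => (-1:ℤ)) = -(∑ i : Fin (m+1), Pi.single i (1:ℤ)) := by
    rw [sum_singles]; funext x; simp
  rw [hfun, map_neg, map_sum]
  have hsum : ∑ i : Fin (m+1), phiA (m+1) (Pi.single i 1)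
      = (∑ j : Fin m, (Pi.single (j.succ) (1:ℤ) : Fin (m+1) → ℤ))
        + (fun _ => (-1:ℤ)) := by
    rw [Fin.sum_univ_castSucc]
    congr 1
    · apply Finset.sum_congr rfl
      intro j _
      rw [phiA_single, dif_pos (by simp)]
      rfl
    · rw [phiA_single, dif_neg (by simp)]
  rw [hsum]
  have h2 : Pi.single (0 : Fin (m+1)) (1:ℤ)
        + ∑ j : Fin m, (Pi.single (j.succ) (1:ℤ) : Fin (m+1) → ℤ)
      = fun _ => 1 := by
    rw [← Fin.sum_univ_succ (fun i : Fin (m+1) => Pi.single i (1:ℤ)), sum_singles]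
  have h3 : ∑ j : Fin m, (Pi.single (j.succ) (1:ℤ) : Fin (m+1) → ℤ)
      = (fun _ => 1) - Pi.single (0 : Fin (m+1)) 1 :=
    eq_sub_of_add_eq ((add_comm _ _).trans h2)
  rw [h3]
  funext x
  simp [Pi.single_apply]

lemma phiA_pow_single (m : ℕ) (k : ℕ) (hk : k < m + 1) :
    ((phiA (m+1))^k) (Pi.single (0 : Fin (m+1)) 1)
      = Pi.single (⟨k, hk⟩ : Fin (m+1)) 1 := by
  induction k with
  | zero => simp
  | succ k ih =>
    have hk' : k < m + 1 := Nat.lt_of_succ_lt hk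
    rw [pow_succ', Module.End.mul_apply, ih hk', phiA_single, dif_pos hk]

lemma phiA_pow_order_zero (m : ℕ) :
    ((phiA (m+1))^(m+2)) (Pi.single (0 : Fin (m+1)) 1) = Pi.single 0 1 := by
  have h1 : ((phiA (m+1))^(m+1)) (Pi.single (0 : Fin (m+1)) 1) = fun _ => -1 := by
    rw [pow_succ', Module.End.mul_apply, phiA_pow_single m m (by omega), phiA_single,
      dif_neg (by simp)]
  rw [show m + 2 = (m+1) + 1 from rfl, pow_succ', Module.End.mul_apply, h1, phiA_neg_ones]

lemma phiA_pow_order (m : ℕ) : (phiA (m+1))^(m+2) = 1 := by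
  apply Module.Basis.ext (Pi.basisFun ℤ (Fin (m+1)))
  intro i
  rw [Pi.basisFun_apply]
  have h : (Pi.single i 1 : Fin (m+1) → ℤ) = ((phiA (m+1))^(i:ℕ)) (Pi.single 0 1) := by
    rw [phiA_pow_single m i i.isLt]
  rw [h, ← Module.End.mul_apply, pow_mul_comm, Module.End.mul_apply, phiA_pow_order_zero,
    Module.End.one_apply]

theorem stmt1 (n p q : ℕ) (hn : Odd n) (hp : 1 ≤ p) (hq : 1 ≤ q)
    (hpq : p ≡ q [MOD n + 1]) :
    LinearMap.range ((1 : Module.End ℤ (Fin n → ℤ)) + ((-1 : ℤ)) ^ (p + 1) • (phiA n) ^ p)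
      = LinearMap.range ((1 : Module.End ℤ (Fin n → ℤ)) + ((-1 : ℤ)) ^ (q + 1) • (phiA n) ^ q) ∧
    Nonempty
      (((Fin n → ℤ) ⧸ LinearMap.range
          ((1 : Module.End ℤ (Fin n → ℤ)) + ((-1 : ℤ)) ^ (p + 1) • (phiA n) ^ p)) ≃+
        ((Fin n → ℤ) ⧸ LinearMap.range
          ((1 : Module.End ℤ (Fin n → ℤ)) + ((-1 : ℤ)) ^ (q + 1) • (phiA n) ^ q))) := by
  obtain ⟨m, hm⟩ : ∃ m, n = m + 1 := ⟨n - 1, by have := hn.pos; omega⟩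
  subst hm
  have key : (phiA (m+1))^(m+2) = 1 := phiA_pow_order m
  have hpow : ∀ r : ℕ, (phiA (m+1)) ^ r = (phiA (m+1)) ^ (r % (m+2)) := by
    intro r
    conv_lhs => rw [← Nat.mod_add_div r (m+2)]
    rw [pow_add, pow_mul, key, one_pow, mul_one]
  have hφ : (phiA (m+1))^p = (phiA (m+1))^q := by
    rw [hpow p, hpow q, show p % (m+2) = q % (m+2) from hpq]
  have h2 : (2:ℕ) ∣ m + 1 + 1 := Even.two_dvd (by simpa using hn.add_one)
  have hmod2 : (p+1) % 2 = (q+1) % 2 := Nat.ModEq.of_dvd h2 (hpq.add_right 1)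
  have hsign : ((-1:ℤ))^(p+1) = (-1)^(q+1) := by
    rw [neg_one_pow_eq_pow_mod_two, hmod2, ← neg_one_pow_eq_pow_mod_two]
  have heq : (1 : Module.End ℤ (Fin (m+1) → ℤ)) + ((-1 : ℤ)) ^ (p + 1) • (phiA (m+1)) ^ p
      = 1 + ((-1 : ℤ)) ^ (q + 1) • (phiA (m+1)) ^ q := by rw [hφ, hsign]
  rw [heq]
  exact ⟨rfl, ⟨AddEquiv.refl _⟩⟩
end

section
/- Let n be odd, let 0 < p ≤ (n+1)/2, let k be the unique integer with 0 < k ≤ p and n+1 ≡ k (mod p), and set m = gcd(p, k). Then the quotient group G_{n,p} = ℤ^n / Im(1 + (−1)^{p+1} φ^p) is generated by the images of e_1, e_2, …, e_m; equivalently, there is a surjective group homomorphism from the free abelian group ℤ^m onto G_{n,p}. -/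
/-- `e_i` for `0 ≤ i ≤ n`, with the convention `e_0 = -(e_1 + ⋯ + e_n)`;
for `1 ≤ i ≤ n` it is the `i`-th standard basis vector of `ℤ^n`. -/
def eA (n : ℕ) (i : ℕ) : Fin n → ℤ :=
  if h : 1 ≤ i ∧ i ≤ n then Pi.single (⟨i - 1, by omega⟩ : Fin n) 1 else fun _ => -1

noncomputable def Lmap (n : ℕ) : (Fin n → ℤ) →ₗ[ℤ] (Fin n → ℤ) where
  toFun v := fun x => (if h : 1 ≤ (x : ℕ) then
      v ⟨(x : ℕ) - 1, Nat.lt_of_le_of_lt (Nat.sub_le _ _) x.isLt⟩ else 0)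
    - v ⟨n - 1, Nat.sub_lt x.pos one_pos⟩
  map_add' v w := by
    funext x; by_cases h : 1 ≤ (x : ℕ) <;> simp [h] <;> ring
  map_smul' c v := by
    funext x; by_cases h : 1 ≤ (x : ℕ) <;> simp [h] <;> ring

lemma Lmap_apply (n : ℕ) (v : Fin n → ℤ) (x : Fin n) :
    Lmap n v x = (if h : 1 ≤ (x : ℕ) then
      v ⟨(x : ℕ) - 1, Nat.lt_of_le_of_lt (Nat.sub_le _ _) x.isLt⟩ else 0)
    - v ⟨n - 1, Nat.sub_lt x.pos one_pos⟩ := rfl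

lemma phiA_eq (n : ℕ) : phiA n = Lmap n := by
  apply (Pi.basisFun ℤ (Fin n)).ext
  intro i
  rw [phiA, Module.Basis.constr_basis, Pi.basisFun_apply]
  funext x
  rw [Lmap_apply]
  have hx := x.isLt
  have hi := i.isLt
  by_cases h : (i : ℕ) + 1 < n
  · rw [dif_pos h]
    by_cases hx1 : 1 ≤ (x : ℕ) <;>
      simp [hx1, Pi.single_apply, Fin.ext_iff] <;> first | omega | (split_ifs <;> omega)
  · rw [dif_neg h]
    by_cases hx1 : 1 ≤ (x : ℕ) <;>
      simp [hx1, Pi.single_apply, Fin.ext_iff] <;> first | omega | (split_ifs <;> omega)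

lemma eA_succ (n : ℕ) (hn : 0 < n) (i : ℕ) (hi : i ≤ n) :
    phiA n (eA n i) = eA n ((i + 1) % (n + 1)) := by
  rw [phiA_eq]
  funext x
  rw [Lmap_apply]
  have hx := x.isLt
  rcases Nat.lt_or_ge i n with hin | hin
  · rcases Nat.eq_zero_or_pos i with rfl | hi1
    · -- eA n 0 = const -1 ; result eA n 1 = single 0 1
      have h1 : (0 + 1) % (n + 1) = 1 := Nat.mod_eq_of_lt (by omega)
      rw [h1]
      simp only [eA]
      have : ¬ (1 ≤ 0 ∧ 0 ≤ n) := by omega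
      rw [dif_neg this, dif_pos (by omega : 1 ≤ 1 ∧ 1 ≤ n)]
      by_cases hx1 : 1 ≤ (x : ℕ) <;>
        simp [hx1, Pi.single_apply, Fin.ext_iff] <;> first | omega | (split_ifs <;> omega)
    · have h1 : (i + 1) % (n + 1) = i + 1 := Nat.mod_eq_of_lt (by omega)
      rw [h1]
      simp only [eA]
      rw [dif_pos (by omega : 1 ≤ i ∧ i ≤ n), dif_pos (by omega : 1 ≤ i + 1 ∧ i + 1 ≤ n)]
      by_cases hx1 : 1 ≤ (x : ℕ) <;>
        simp [hx1, Pi.single_apply, Fin.ext_iff] <;> first | omega | (split_ifs <;> omega)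
  · -- i = n
    obtain rfl : i = n := by omega
    have h1 : (i + 1) % (i + 1) = 0 := Nat.mod_self _
    rw [h1]
    simp only [eA]
    rw [dif_pos (by omega : 1 ≤ i ∧ i ≤ i), dif_neg (by omega : ¬(1 ≤ 0 ∧ 0 ≤ i))]
    by_cases hx1 : 1 ≤ (x : ℕ) <;>
      simp [hx1, Pi.single_apply, Fin.ext_iff] <;> first | omega | (split_ifs <;> omega)

lemma eA_mod_succ (n : ℕ) (hn : 0 < n) (i : ℕ) :
    phiA n (eA n (i % (n + 1))) = eA n ((i + 1) % (n + 1)) := by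
  rw [eA_succ n hn _ (Nat.le_of_lt_succ (Nat.mod_lt _ (by omega)))]
  simp only [Nat.succ_eq_add_one]
  have h1 : 1 % (n + 1) = 1 := Nat.mod_eq_of_lt (by omega)
  have h2 : (i % (n + 1) + 1) % (n + 1) = (i + 1) % (n + 1) := calc (i % (n + 1) + 1) % (n + 1) = (i % (n + 1) + 1 % (n + 1)) % (n + 1) := by rw [h1]
    _ = (i + 1) % (n + 1) := (Nat.add_mod i 1 (n + 1)).symm
  rw [h2]

lemma eA_mod_pow (n : ℕ) (hn : 0 < n) (t i : ℕ) :
    ((phiA n) ^ t) (eA n (i % (n + 1))) = eA n ((i + t) % (n + 1)) := by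
  induction t generalizing i with
  | zero => simp
  | succ t ih =>
    rw [pow_succ, Module.End.mul_apply, eA_mod_succ n hn i, ih (i + 1),
      show i + 1 + t = i + (t + 1) from by omega]

lemma exists_t (p N m d : ℕ) (hN : 0 < N) (hm : Nat.gcd p N = m) (hd : m ∣ d) :
    ∃ t : ℕ, t * p ≡ d [MOD N] := by
  obtain ⟨c, rfl⟩ := hd
  set A := Nat.gcdA p N with hA
  set B := Nat.gcdB p N with hB
  have bez : (m : ℤ) = p * A + N * B := by rw [← hm]; exact Nat.gcd_eq_gcd_ab p N
  set x : ℤ := A * c with hx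
  refine ⟨(x % (N : ℤ)).toNat, ?_⟩
  have hNz : (0 : ℤ) < (N : ℤ) := by exact_mod_cast hN
  have ht : ((x % (N : ℤ)).toNat : ℤ) = x % (N : ℤ) :=
    Int.toNat_of_nonneg (Int.emod_nonneg x (by omega))
  rw [Nat.modEq_iff_dvd]
  push_cast
  rw [ht]
  have h1 : (N : ℤ) ∣ x - x % (N : ℤ) := ⟨x / N, by rw [Int.emod_def]; ring⟩
  have h2 : (N : ℤ) ∣ (m : ℤ) * c - x * p := ⟨B * c, by rw [bez, hx]; ring⟩
  convert dvd_add h2 (h1.mul_right p) using 1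
  · rfl
  ring

theorem stmt4 (n p k m : ℕ) (hn : Odd n) (hp : 0 < p) (hple : p ≤ (n + 1) / 2)
    (hk : 0 < k) (hkp : k ≤ p) (hcong : n + 1 ≡ k [MOD p]) (hm : m = Nat.gcd p k) :
    AddSubgroup.closure
        (Set.range fun j : Fin m =>
          (Submodule.Quotient.mk (eA n ((j : ℕ) + 1)) :
            (Fin n → ℤ) ⧸ LinearMap.range
              ((1 : Module.End ℤ (Fin n → ℤ)) + ((-1 : ℤ)) ^ (p + 1) • (phiA n) ^ p))) = ⊤ ∧
    ∃ f : (Fin m → ℤ) →+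
        ((Fin n → ℤ) ⧸ LinearMap.range
          ((1 : Module.End ℤ (Fin n → ℤ)) + ((-1 : ℤ)) ^ (p + 1) • (phiA n) ^ p)),
      Function.Surjective f := by
  obtain ⟨w, hw⟩ := hn
  have hn1 : 0 < n := by omega
  have hpn : p ≤ n := by omega
  have hm0 : 0 < m := by rw [hm]; exact Nat.gcd_pos_of_pos_left _ hp
  have hmp : m ≤ p := by rw [hm]; exact Nat.gcd_le_left _ hp
  set N := n + 1 with hN
  set ε : ℤ := (-1) ^ (p + 1) with hε
  set A : Module.End ℤ (Fin n → ℤ) := 1 + ε • (phiA n) ^ p with hA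
  have hε2 : ε * ε = 1 := by rw [hε, ← mul_pow]; norm_num
  have hεp : -ε = (-1 : ℤ) ^ p := by rw [hε, pow_succ]; ring
  -- the quotient relation
  have hrel : ∀ i : ℕ,
      (Submodule.Quotient.mk (eA n ((i + p) % N)) : (Fin n → ℤ) ⧸ LinearMap.range A)
        = ((-1 : ℤ) ^ p) • Submodule.Quotient.mk (eA n (i % N)) := by
    intro i
    have h0 : (Submodule.Quotient.mk (A (eA n (i % N))) :
        (Fin n → ℤ) ⧸ LinearMap.range A) = 0 :=
      (Submodule.Quotient.mk_eq_zero _).2 (LinearMap.mem_range_self A _)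
    have hAv : A (eA n (i % N)) = eA n (i % N) + ε • eA n ((i + p) % N) := by
      rw [hA, LinearMap.add_apply, LinearMap.smul_apply, Module.End.one_apply,
        eA_mod_pow n hn1 p i]
    rw [hAv, Submodule.Quotient.mk_add, Submodule.Quotient.mk_smul] at h0
    have h1 : ε • (Submodule.Quotient.mk (eA n ((i + p) % N)) :
        (Fin n → ℤ) ⧸ LinearMap.range A) = -Submodule.Quotient.mk (eA n (i % N)) := by
      rw [eq_neg_iff_add_eq_zero, add_comm]; exact h0
    calc (Submodule.Quotient.mk (eA n ((i + p) % N)) : (Fin n → ℤ) ⧸ LinearMap.range A)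
        = (ε * ε) • Submodule.Quotient.mk (eA n ((i + p) % N)) := by rw [hε2, one_smul]
      _ = ε • (ε • Submodule.Quotient.mk (eA n ((i + p) % N))) := mul_smul _ _ _
      _ = ε • (-Submodule.Quotient.mk (eA n (i % N))) := by rw [h1]
      _ = (-ε) • Submodule.Quotient.mk (eA n (i % N)) := by rw [smul_neg, neg_smul]
      _ = ((-1 : ℤ) ^ p) • Submodule.Quotient.mk (eA n (i % N)) := by rw [hεp]
  set S : Set ((Fin n → ℤ) ⧸ LinearMap.range A) := Set.range fun j : Fin m =>
    (Submodule.Quotient.mk (eA n ((j : ℕ) + 1)) : (Fin n → ℤ) ⧸ LinearMap.range A) with hS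
  set H := AddSubgroup.closure S with hH
  have hS1 : ∀ j : ℕ, 1 ≤ j → j ≤ m →
      (Submodule.Quotient.mk (eA n j) : (Fin n → ℤ) ⧸ LinearMap.range A) ∈ H := by
    intro j hj1 hjm
    refine AddSubgroup.subset_closure ⟨⟨j - 1, by omega⟩, ?_⟩
    simp only [Fin.val_mk]
    have hjj : j - 1 + 1 = j := by omega
    rw [hjj]
  -- gcd p N = m
  have hgcd : Nat.gcd p N = m := by
    rcases eq_or_lt_of_le hkp with heq | hlt
    · have hdvd : p ∣ N := by
        refine (Nat.modEq_zero_iff_dvd).1 ?_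
        rw [heq] at hcong
        exact hcong.trans (Nat.modEq_zero_iff_dvd.2 dvd_rfl)
      rw [Nat.gcd_eq_left hdvd, hm, heq, Nat.gcd_self]
    · have hNk : N % p = k := by
        have := hcong
        unfold Nat.ModEq at this
        rw [Nat.mod_eq_of_lt hlt] at this
        exact this
      rw [Nat.gcd_rec p N, hNk, Nat.gcd_comm, ← hm]
  -- main membership
  have hmem : ∀ i : ℕ, 1 ≤ i → i ≤ n →
      (Submodule.Quotient.mk (eA n i) : (Fin n → ℤ) ⧸ LinearMap.range A) ∈ H := by
    intro i hi1 hin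
    set j := if i % m = 0 then m else i % m with hj
    have hj1 : 1 ≤ j := by
      rw [hj]; split <;> [exact hm0; omega]
    have hjm : j ≤ m := by
      rw [hj]; split
      · exact le_rfl
      · exact le_of_lt (Nat.mod_lt _ hm0)
    have hji : j ≤ i := by
      rw [hj]; split
      · exact Nat.le_of_dvd (by omega) (Nat.dvd_of_mod_eq_zero (by assumption))
      · exact Nat.mod_le _ _
    have hdvd : m ∣ i - j := by
      rw [hj]; split
      · exact Nat.dvd_sub (Nat.dvd_of_mod_eq_zero (by assumption)) dvd_rfl
      · have := Nat.mod_add_div i m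
        exact ⟨i / m, by omega⟩
    obtain ⟨t, htEq⟩ := exists_t p N m (i - j) (by omega) hgcd hdvd
    have hmod : (j + t * p) % N = i := by
      have h2 : j + t * p ≡ j + (i - j) [MOD N] := (Nat.ModEq.refl j).add htEq
      have h3 : j + (i - j) = i := by omega
      rw [h3] at h2
      unfold Nat.ModEq at h2
      rw [Nat.mod_eq_of_lt (by omega : i < N)] at h2
      exact h2
    have hind : ∀ s : ℕ,
        (Submodule.Quotient.mk (eA n ((j + s * p) % N)) :
          (Fin n → ℤ) ⧸ LinearMap.range A) ∈ H := by
      intro s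
      induction s with
      | zero =>
        have : (j + 0 * p) % N = j := by
          rw [Nat.zero_mul, Nat.add_zero]; exact Nat.mod_eq_of_lt (by omega)
        rw [this]; exact hS1 j hj1 hjm
      | succ s ih =>
        have h4 : j + (s + 1) * p = (j + s * p) + p := by ring
        rw [h4, hrel (j + s * p)]
        exact AddSubgroup.zsmul_mem H ih _
    have := hind t
    rwa [hmod] at this
  -- closure = top
  have heA : ∀ j : Fin n, eA n ((j : ℕ) + 1) = Pi.single j 1 := by
    intro j
    rw [eA, dif_pos (by omega : 1 ≤ (j : ℕ) + 1 ∧ (j : ℕ) + 1 ≤ n)]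
    congr 1
  have htop : H = ⊤ := by
    rw [eq_top_iff]
    intro x _
    obtain ⟨v, rfl⟩ := Submodule.Quotient.mk_surjective (LinearMap.range A) x
    have hv : v = ∑ j : Fin n, Pi.single j (v j) := (Finset.univ_sum_single v).symm
    have hsingle : ∀ j : Fin n, Pi.single j (v j) = v j • (Pi.single j 1 : Fin n → ℤ) := by
      intro j; funext x
      by_cases hx : x = j <;> simp [Pi.single_apply, hx]
    have : (Submodule.Quotient.mk v : (Fin n → ℤ) ⧸ LinearMap.range A)
        = ∑ j : Fin n, (v j) • Submodule.Quotient.mk (Pi.single j (1 : ℤ)) := by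
      conv_lhs => rw [hv]
      rw [← Submodule.mkQ_apply, map_sum]
      refine Finset.sum_congr rfl fun j _ => ?_
      rw [hsingle j, map_smul, Submodule.mkQ_apply]
    rw [this]
    refine AddSubgroup.sum_mem H fun j _ => AddSubgroup.zsmul_mem H ?_ _
    rw [← heA j]
    exact hmem ((j : ℕ) + 1) (by omega) (by have := j.isLt; omega)
  constructor
  · exact htop
  · set F : (Fin m → ℤ) →ₗ[ℤ] ((Fin n → ℤ) ⧸ LinearMap.range A) :=
      (Pi.basisFun ℤ (Fin m)).constr ℤ (fun j : Fin m =>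
        (Submodule.Quotient.mk (eA n ((j : ℕ) + 1)) :
          (Fin n → ℤ) ⧸ LinearMap.range A)) with hF
    refine ⟨F.toAddMonoidHom, ?_⟩
    rw [← AddMonoidHom.range_eq_top]
    rw [eq_top_iff, ← htop, hH]
    refine AddSubgroup.closure_le _ |>.2 ?_
    rintro x ⟨j, rfl⟩
    refine ⟨(Pi.single j 1 : Fin m → ℤ), ?_⟩
    show F (Pi.single j 1) = _
    rw [hF, ← Pi.basisFun_apply, Module.Basis.constr_basis]
end

section
/- Let n be odd, let 0 < p ≤ (n+1)/2 with p even, let k be the unique integer with 0 < k ≤ p and n+1 ≡ k (mod p), and set m = gcd(p, k). Write n = am + b with 0 ≤ b < m, and let c be the unique integer with 1 ≤ c ≤ m and n+1−p ≡ c (mod m). Then G_{n,p} = ℤ^n / Im(1 − φ^p) is isomorphic to the quotient of the free abelian group on generators x_1, …, x_m by the single relation x_c + Σ_{j=1}^{m} α_j x_j = 0, where α_j = a+1 for 1 ≤ j ≤ b and α_j = a for b < j ≤ m. -/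
open Polynomial Finset

namespace Stmt5Aux

noncomputable def toPolyL (N : ℕ) : (Fin N → ℤ) →ₗ[ℤ] Polynomial ℤ :=
  (Pi.basisFun ℤ (Fin N)).constr ℤ (fun i => X ^ (i : ℕ))

lemma toPolyL_apply (N : ℕ) (x : Fin N → ℤ) :
    toPolyL N x = ∑ i : Fin N, x i • X ^ (i : ℕ) := by
  rw [toPolyL, Module.Basis.constr_apply_fintype]
  simp [Pi.basisFun_equivFun]

lemma coeff_toPolyL {N : ℕ} (x : Fin N → ℤ) (j : Fin N) :
    (toPolyL N x).coeff (j : ℕ) = x j := by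
  rw [toPolyL_apply, Polynomial.finset_sum_coeff]
  simp only [Polynomial.coeff_smul, Polynomial.coeff_X_pow, smul_eq_mul]
  rw [Finset.sum_eq_single j]
  · simp
  · intro i _ hij
    have : ¬ ((j : ℕ) = (i : ℕ)) := fun h => hij (Fin.ext h.symm)
    simp [this]
  · simp

lemma degree_toPolyL_lt (N : ℕ) (x : Fin N → ℤ) (hN : 0 < N) :
    (toPolyL N x).degree < (N : WithBot ℕ) := by
  rw [toPolyL_apply]
  refine lt_of_le_of_lt (Polynomial.degree_sum_le _ _) ?_
  rw [Finset.sup_lt_iff (by exact_mod_cast WithBot.bot_lt_coe N)]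
  intro i _
  refine lt_of_le_of_lt (Polynomial.degree_smul_le _ _) ?_
  rw [Polynomial.degree_X_pow]
  exact_mod_cast i.isLt

lemma toPolyL_coeff_eq (N : ℕ) (r : Polynomial ℤ) (hr : r.degree < (N : WithBot ℕ)) :
    toPolyL N (fun i => r.coeff (i : ℕ)) = r := by
  rcases eq_or_ne r 0 with rfl | h
  · have h0 : (fun i : Fin N => (0 : Polynomial ℤ).coeff (i : ℕ)) = (0 : Fin N → ℤ) := by
      funext i; simp
    rw [h0, map_zero]
  · have hnat : r.natDegree < N := (Polynomial.natDegree_lt_iff_degree_lt h).mpr hr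
    rw [toPolyL_apply, Fin.sum_univ_eq_sum_range (fun i => r.coeff i • X ^ i)]
    conv_rhs => rw [Polynomial.as_sum_range' r N hnat]
    exact Finset.sum_congr rfl (fun i _ => by
      rw [Polynomial.smul_eq_C_mul, Polynomial.C_mul_X_pow_eq_monomial])

lemma toPolyL_inj {N : ℕ} {x : Fin N → ℤ} (h : toPolyL N x = 0) : x = 0 := by
  funext j
  have := coeff_toPolyL x j
  rw [h] at this
  simpa using this.symm

noncomputable def PhiP (n : ℕ) : Polynomial ℤ := ∑ i ∈ Finset.range (n + 1), X ^ i

noncomputable def NP (m : ℕ) : Polynomial ℤ := ∑ i ∈ Finset.range m, X ^ i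

lemma monic_PhiP (n : ℕ) : (PhiP n).Monic := Polynomial.monic_geom_sum_X (Nat.succ_ne_zero n)

lemma geom_mul_PhiP (n : ℕ) : PhiP n * (X - 1) = X ^ (n + 1) - 1 := geom_sum_mul X (n + 1)

lemma degree_PhiP (n : ℕ) : (PhiP n).degree = n := by
  have hne : PhiP n ≠ 0 := (monic_PhiP n).ne_zero
  have h := congrArg Polynomial.degree (geom_mul_PhiP n)
  rw [Polynomial.degree_mul, Polynomial.degree_eq_natDegree hne] at h
  have h1 : ((X : Polynomial ℤ) - 1).degree = 1 := by
    simpa using Polynomial.degree_X_sub_C (1 : ℤ)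
  have h2 : ((X : Polynomial ℤ) ^ (n + 1) - 1).degree = (n + 1 : ℕ) := by
    simpa using Polynomial.degree_X_pow_sub_C (Nat.succ_pos n) (1 : ℤ)
  rw [h1, h2] at h
  have h3 : (PhiP n).natDegree + 1 = n + 1 := by exact_mod_cast h
  rw [Polynomial.degree_eq_natDegree hne]
  exact_mod_cast Nat.succ_injective h3

lemma toPolyL_const (m : ℕ) (cc : ℤ) : toPolyL m (fun _ => cc) = C cc * NP m := by
  rw [toPolyL_apply, Fin.sum_univ_eq_sum_range (fun i => cc • (X : Polynomial ℤ) ^ i), NP,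
    Finset.mul_sum]
  exact Finset.sum_congr rfl (fun i _ => Polynomial.smul_eq_C_mul cc)

end Stmt5Aux
noncomputable section
namespace Stmt5Aux

/-- Quotient map as a `ℤ`-linear map. -/
def mkL (I : Ideal (Polynomial ℤ)) : Polynomial ℤ →ₗ[ℤ] (Polynomial ℤ ⧸ I) :=
  (Ideal.Quotient.mk I).toAddMonoidHom.toIntLinearMap

@[simp] lemma mkL_apply (I : Ideal (Polynomial ℤ)) (f : Polynomial ℤ) :
    mkL I f = Ideal.Quotient.mk I f := rfl

lemma mk_toPolyL_phi (n : ℕ) (x : Fin n → ℤ) :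
    Ideal.Quotient.mk (Ideal.span {PhiP n}) (toPolyL n (phiA n x)) =
      Ideal.Quotient.mk (Ideal.span {PhiP n}) (X * toPolyL n x) := by
  set I := Ideal.span {PhiP n}
  have key : (mkL I).comp ((toPolyL n).comp (phiA n)) =
      (mkL I).comp ((LinearMap.mulLeft ℤ (X : Polynomial ℤ)).comp (toPolyL n)) := by
    apply (Pi.basisFun ℤ (Fin n)).ext
    intro i
    simp only [LinearMap.comp_apply, mkL_apply, LinearMap.mulLeft_apply]
    have hb : toPolyL n (Pi.basisFun ℤ (Fin n) i) = X ^ (i : ℕ) :=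
      (Pi.basisFun ℤ (Fin n)).constr_basis ℤ _ i
    have hphi : phiA n (Pi.basisFun ℤ (Fin n) i) =
        (if h : (i : ℕ) + 1 < n then Pi.single (⟨(i : ℕ) + 1, h⟩ : Fin n) 1
          else fun _ => -1) :=
      (Pi.basisFun ℤ (Fin n)).constr_basis ℤ _ i
    rw [hb, hphi]
    by_cases h : (i : ℕ) + 1 < n
    · rw [dif_pos h]
      have : (Pi.single (⟨(i : ℕ) + 1, h⟩ : Fin n) 1 : Fin n → ℤ) =
          Pi.basisFun ℤ (Fin n) ⟨(i : ℕ) + 1, h⟩ := (Pi.basisFun_apply ℤ (Fin n) _).symm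
      have hb2 : toPolyL n (Pi.basisFun ℤ (Fin n) ⟨(i : ℕ) + 1, h⟩) = X ^ ((i : ℕ) + 1) :=
        (Pi.basisFun ℤ (Fin n)).constr_basis ℤ _ _
      rw [this, hb2, ← pow_succ']
    · rw [dif_neg h]
      have hin : (i : ℕ) + 1 = n := by have := i.isLt; omega
      have hneg : toPolyL n (fun _ => (-1 : ℤ)) = -(∑ j ∈ Finset.range n, (X : Polynomial ℤ) ^ j) := by
        rw [show (fun _ : Fin n => (-1 : ℤ)) = (fun _ : Fin n => ((-1 : ℤ))) from rfl,
          toPolyL_const, NP]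
        simp [neg_mul]
      rw [hneg, Ideal.Quotient.mk_eq_mk_iff_sub_mem]
      have hXX : (X : Polynomial ℤ) * X ^ (i : ℕ) = X ^ n := by
        rw [← pow_succ', hin]
      rw [hXX]
      have : -(∑ j ∈ Finset.range n, (X : Polynomial ℤ) ^ j) - X ^ n = -(PhiP n) := by
        rw [PhiP, Finset.sum_range_succ]; ring
      rw [this]
      exact neg_mem (Ideal.subset_span rfl)
  exact congrFun (congrArg (fun (f : (Fin n → ℤ) →ₗ[ℤ] (Polynomial ℤ ⧸ I)) => ⇑f) key) x

lemma mk_toPolyL_phi_pow (n : ℕ) (j : ℕ) (x : Fin n → ℤ) :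
    Ideal.Quotient.mk (Ideal.span {PhiP n}) (toPolyL n ((phiA n ^ j) x)) =
      Ideal.Quotient.mk (Ideal.span {PhiP n}) (X ^ j * toPolyL n x) := by
  induction j generalizing x with
  | zero => simp
  | succ j ih =>
    have hc : (phiA n ^ (j + 1)) x = (phiA n ^ j) (phiA n x) := by
      rw [pow_succ]; rfl
    rw [hc, ih (phiA n x), map_mul, mk_toPolyL_phi n x, ← map_mul]
    congr 1
    ring

lemma toPolyL_eq_of_mk {n : ℕ} (hn : 0 < n) {u v : Fin n → ℤ}
    (h : Ideal.Quotient.mk (Ideal.span {PhiP n}) (toPolyL n u) =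
      Ideal.Quotient.mk (Ideal.span {PhiP n}) (toPolyL n v)) : u = v := by
  rw [Ideal.Quotient.mk_eq_mk_iff_sub_mem, ← map_sub, Ideal.mem_span_singleton] at h
  have hz : toPolyL n (u - v) = 0 :=
    Polynomial.eq_zero_of_dvd_of_degree_lt h
      (by rw [degree_PhiP]; exact degree_toPolyL_lt n _ hn)
  have := toPolyL_inj hz
  exact sub_eq_zero.mp this

lemma pow_gcd_sub_one_mem {R : Type*} [CommRing R] (I : Ideal R) (x : R) :
    ∀ p k : ℕ, x ^ p - 1 ∈ I → x ^ k - 1 ∈ I → x ^ (Nat.gcd p k) - 1 ∈ I := by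
  intro p k
  induction p, k using Nat.gcd.induction with
  | H0 k => intro _ h2; simpa using h2
  | H1 p k hp ih =>
    intro h1 h2
    rw [Nat.gcd_rec]
    refine ih ?_ h1
    have e : x ^ k - x ^ (k % p) = x ^ (k % p) * ((x ^ p) ^ (k / p) - 1) := by
      rw [mul_sub, mul_one, ← pow_mul, ← pow_add]
      congr 2
      exact (Nat.mod_add_div k p).symm
    have hd : x ^ p - 1 ∣ (x ^ p) ^ (k / p) - 1 := by
      simpa using sub_dvd_pow_sub_pow (x ^ p) 1 (k / p)
    obtain ⟨t, ht⟩ := hd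
    have hmem : x ^ k - x ^ (k % p) ∈ I := by
      rw [e, ht, ← mul_assoc, mul_comm (x ^ (k % p)) (x ^ p - 1), mul_assoc]
      exact Ideal.mul_mem_right _ _ h1
    have : x ^ (k % p) - 1 = (x ^ k - 1) - (x ^ k - x ^ (k % p)) := by ring
    rw [this]
    exact sub_mem h2 hmem

end Stmt5Aux
end
noncomputable section
namespace Stmt5Aux

lemma equiv_n (n p : ℕ) (hn : 0 < n) :
    Nonempty (((Fin n → ℤ) ⧸ LinearMap.range
        ((1 : Module.End ℤ (Fin n → ℤ)) - phiA n ^ p)) ≃ₗ[ℤ]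
      (Polynomial ℤ ⧸ Ideal.span {PhiP n, (X : Polynomial ℤ) ^ p - 1})) := by
  set I := Ideal.span {PhiP n, (X : Polynomial ℤ) ^ p - 1} with hI
  have hΦI : PhiP n ∈ I := Ideal.subset_span (by simp)
  have hXpI : (X : Polynomial ℤ) ^ p - 1 ∈ I := Ideal.subset_span (by simp)
  set L : (Fin n → ℤ) →ₗ[ℤ] (Polynomial ℤ ⧸ I) := (mkL I).comp (toPolyL n) with hL
  have hmon := monic_PhiP n
  have hsurj : Function.Surjective L := by
    intro y
    obtain ⟨f, rfl⟩ := Ideal.Quotient.mk_surjective y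
    refine ⟨fun i => (f %ₘ PhiP n).coeff (i : ℕ), ?_⟩
    have hdeg : (f %ₘ PhiP n).degree < (n : WithBot ℕ) := by
      have := Polynomial.degree_modByMonic_lt f hmon
      rwa [degree_PhiP] at this
    show Ideal.Quotient.mk I (toPolyL n _) = Ideal.Quotient.mk I f
    rw [toPolyL_coeff_eq n _ hdeg, Ideal.Quotient.mk_eq_mk_iff_sub_mem,
      Polynomial.modByMonic_eq_sub_mul_div f _]
    have : f - PhiP n * (f /ₘ PhiP n) - f = PhiP n * (-(f /ₘ PhiP n)) := by ring
    rw [this]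
    exact Ideal.mul_mem_right _ _ hΦI
  have hker : LinearMap.ker L =
      LinearMap.range ((1 : Module.End ℤ (Fin n → ℤ)) - phiA n ^ p) := by
    ext x
    constructor
    · intro hx
      have hxI : toPolyL n x ∈ I := by
        rw [← Ideal.Quotient.eq_zero_iff_mem]
        exact hx
      rw [hI, Ideal.mem_span_pair] at hxI
      obtain ⟨u, v, huv⟩ := hxI
      set r : Polynomial ℤ := (-v) %ₘ PhiP n with hrdef
      have hrdeg : r.degree < (n : WithBot ℕ) := by
        have := Polynomial.degree_modByMonic_lt (-v) hmon
        rwa [degree_PhiP] at this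
      refine ⟨fun i => r.coeff (i : ℕ), ?_⟩
      apply toPolyL_eq_of_mk hn
      have happ : ((1 : Module.End ℤ (Fin n → ℤ)) - phiA n ^ p) (fun i => r.coeff (i : ℕ)) =
          (fun i : Fin n => r.coeff (i : ℕ)) -
            (phiA n ^ p) (fun i : Fin n => r.coeff (i : ℕ)) := rfl
      rw [happ, map_sub, map_sub, mk_toPolyL_phi_pow n p, toPolyL_coeff_eq n r hrdeg,
        ← map_sub, Ideal.Quotient.mk_eq_mk_iff_sub_mem, Ideal.mem_span_singleton]
      have hr : r = -v - PhiP n * ((-v) /ₘ PhiP n) :=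
        Polynomial.modByMonic_eq_sub_mul_div (-v) _
      refine ⟨-(1 - X ^ p) * ((-v) /ₘ PhiP n) - u, ?_⟩
      rw [hr, ← huv]
      ring
    · rintro ⟨y, rfl⟩
      show Ideal.Quotient.mk I (toPolyL n _) = 0
      rw [Ideal.Quotient.eq_zero_iff_mem]
      have h1 : toPolyL n ((phiA n ^ p) y) - X ^ p * toPolyL n y ∈ Ideal.span {PhiP n} :=
        (Ideal.Quotient.mk_eq_mk_iff_sub_mem _ _).mp (mk_toPolyL_phi_pow n p y)
      have h1' : toPolyL n ((phiA n ^ p) y) - X ^ p * toPolyL n y ∈ I := by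
        refine Ideal.span_mono ?_ h1
        intro t ht
        rw [ht]
        exact Set.mem_insert _ _
      have h2 : (1 - (X : Polynomial ℤ) ^ p) * toPolyL n y ∈ I := by
        have he : (1 - (X : Polynomial ℤ) ^ p) * toPolyL n y =
            ((X : Polynomial ℤ) ^ p - 1) * (-(toPolyL n y)) := by ring
        rw [he]
        exact Ideal.mul_mem_right _ _ hXpI
      have happ : ((1 : Module.End ℤ (Fin n → ℤ)) - phiA n ^ p) y = y - (phiA n ^ p) y := rfl
      have he2 : toPolyL n (((1 : Module.End ℤ (Fin n → ℤ)) - phiA n ^ p) y) =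
          (1 - (X : Polynomial ℤ) ^ p) * toPolyL n y -
            (toPolyL n ((phiA n ^ p) y) - X ^ p * toPolyL n y) := by
        rw [happ, map_sub]
        ring
      rw [he2]
      exact sub_mem h2 h1'
  exact ⟨(Submodule.quotEquivOfEq _ _ hker.symm).trans (L.quotKerEquivOfSurjective hsurj)⟩

lemma equiv_m (m : ℕ) (hm : 0 < m) (A : ℤ) :
    Nonempty (((Fin m → ℤ) ⧸ Submodule.span ℤ ({fun _ : Fin m => A} : Set (Fin m → ℤ))) ≃ₗ[ℤ]
      (Polynomial ℤ ⧸ Ideal.span {(X : Polynomial ℤ) ^ m - 1, C A * NP m})) := by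
  set J := Ideal.span {(X : Polynomial ℤ) ^ m - 1, C A * NP m} with hJ
  have hXmJ : (X : Polynomial ℤ) ^ m - 1 ∈ J := Ideal.subset_span (by simp)
  have hANJ : C A * NP m ∈ J := Ideal.subset_span (by simp)
  have hmon : ((X : Polynomial ℤ) ^ m - 1).Monic := by
    have := Polynomial.monic_X_pow_sub_C (1 : ℤ) (Nat.pos_iff_ne_zero.mp hm)
    simpa using this
  have hdegXm : ((X : Polynomial ℤ) ^ m - 1).degree = m := by
    have := Polynomial.degree_X_pow_sub_C hm (1 : ℤ)
    simpa using this
  set L : (Fin m → ℤ) →ₗ[ℤ] (Polynomial ℤ ⧸ J) := (mkL J).comp (toPolyL m) with hL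
  have hsurj : Function.Surjective L := by
    intro y
    obtain ⟨f, rfl⟩ := Ideal.Quotient.mk_surjective y
    refine ⟨fun i => (f %ₘ ((X : Polynomial ℤ) ^ m - 1)).coeff (i : ℕ), ?_⟩
    have hdeg : (f %ₘ ((X : Polynomial ℤ) ^ m - 1)).degree < (m : WithBot ℕ) := by
      have := Polynomial.degree_modByMonic_lt f hmon
      rwa [hdegXm] at this
    show Ideal.Quotient.mk J (toPolyL m _) = Ideal.Quotient.mk J f
    rw [toPolyL_coeff_eq m _ hdeg, Ideal.Quotient.mk_eq_mk_iff_sub_mem,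
      Polynomial.modByMonic_eq_sub_mul_div f _]
    have : f - ((X : Polynomial ℤ) ^ m - 1) * (f /ₘ ((X : Polynomial ℤ) ^ m - 1)) - f =
        ((X : Polynomial ℤ) ^ m - 1) * (-(f /ₘ ((X : Polynomial ℤ) ^ m - 1))) := by ring
    rw [this]
    exact Ideal.mul_mem_right _ _ hXmJ
  have hker : LinearMap.ker L = Submodule.span ℤ ({fun _ : Fin m => A} : Set (Fin m → ℤ)) := by
    ext x
    constructor
    · intro hx
      have hxJ : toPolyL m x ∈ J := by
        rw [← Ideal.Quotient.eq_zero_iff_mem]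
        exact hx
      rw [hJ, Ideal.mem_span_pair] at hxJ
      obtain ⟨u, v, huv⟩ := hxJ
      obtain ⟨h, hh⟩ : (X : Polynomial ℤ) - 1 ∣ v - C (v.eval 1) := by
        simpa using Polynomial.X_sub_C_dvd_sub_C_eval (a := (1 : ℤ)) (p := v)
      have hNm : NP m * ((X : Polynomial ℤ) - 1) = (X : Polynomial ℤ) ^ m - 1 :=
        geom_sum_mul X m
      have hkey : toPolyL m (x - fun _ => A * v.eval 1) =
          ((X : Polynomial ℤ) ^ m - 1) * (u + C A * h) := by
        rw [map_sub, toPolyL_const, ← huv, map_mul]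
        have hv : v = C (v.eval 1) + ((X : Polynomial ℤ) - 1) * h := by
          rw [← hh]; ring
        calc u * ((X : Polynomial ℤ) ^ m - 1) + v * (C A * NP m) - C A * C (v.eval 1) * NP m
            = u * ((X : Polynomial ℤ) ^ m - 1) +
              (v - C (v.eval 1)) * C A * NP m := by ring
          _ = u * ((X : Polynomial ℤ) ^ m - 1) +
              C A * h * (NP m * ((X : Polynomial ℤ) - 1)) := by rw [hh]; ring
          _ = ((X : Polynomial ℤ) ^ m - 1) * (u + C A * h) := by rw [hNm]; ring
      have hz : toPolyL m (x - fun _ => A * v.eval 1) = 0 := by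
        refine Polynomial.eq_zero_of_dvd_of_degree_lt ⟨u + C A * h, hkey⟩ ?_
        rw [hdegXm]
        exact degree_toPolyL_lt m _ hm
      have hxe : x = fun _ => A * v.eval 1 := sub_eq_zero.mp (toPolyL_inj hz)
      rw [Submodule.mem_span_singleton]
      refine ⟨v.eval 1, ?_⟩
      rw [hxe]
      funext j
      simp [mul_comm]
    · intro hx
      rw [Submodule.mem_span_singleton] at hx
      obtain ⟨t, rfl⟩ := hx
      rw [LinearMap.mem_ker, map_smul]
      have h0 : L (fun _ => A) = 0 := by
        show Ideal.Quotient.mk J (toPolyL m (fun _ => A)) = 0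
        rw [toPolyL_const, Ideal.Quotient.eq_zero_iff_mem]
        exact hANJ
      rw [h0, smul_zero]
  exact ⟨(Submodule.quotEquivOfEq _ _ hker.symm).trans (L.quotKerEquivOfSurjective hsurj)⟩

end Stmt5Aux
end
noncomputable section
namespace Stmt5Aux

lemma ideal_eq (n p k m A' : ℕ) (hm : 0 < m)
    (h1 : n + 1 = A' * m) (hkle : k ≤ n + 1) (h2 : p ∣ n + 1 - k)
    (hgcd : m = Nat.gcd p k) :
    Ideal.span {PhiP n, (X : Polynomial ℤ) ^ p - 1} =
      Ideal.span {(X : Polynomial ℤ) ^ m - 1, C ((A' : ℤ)) * NP m} := by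
  set I := Ideal.span {PhiP n, (X : Polynomial ℤ) ^ p - 1} with hII
  set J := Ideal.span {(X : Polynomial ℤ) ^ m - 1, C ((A' : ℤ)) * NP m} with hJJ
  have hΦI : PhiP n ∈ I := Ideal.subset_span (by simp)
  have hXpI : (X : Polynomial ℤ) ^ p - 1 ∈ I := Ideal.subset_span (by simp)
  have hXmJ : (X : Polynomial ℤ) ^ m - 1 ∈ J := Ideal.subset_span (by simp)
  have hANJ : C ((A' : ℤ)) * NP m ∈ J := Ideal.subset_span (by simp)
  have hmp : m ∣ p := hgcd ▸ Nat.gcd_dvd_left p k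
  have hXn1 : (X : Polynomial ℤ) ^ (n + 1) - 1 ∈ I := by
    rw [← geom_mul_PhiP n]
    exact Ideal.mul_mem_right _ _ hΦI
  have hXk : (X : Polynomial ℤ) ^ k - 1 ∈ I := by
    obtain ⟨q, hq⟩ := h2
    have hkpq : k + p * q = n + 1 := by omega
    have e : (X : Polynomial ℤ) ^ k - 1 =
        ((X : Polynomial ℤ) ^ (n + 1) - 1) - X ^ k * (((X : Polynomial ℤ) ^ p) ^ q - 1) := by
      rw [mul_sub, mul_one, ← pow_mul, ← pow_add, hkpq]
      ring
    obtain ⟨t, ht⟩ : (X : Polynomial ℤ) ^ p - 1 ∣ ((X : Polynomial ℤ) ^ p) ^ q - 1 := by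
      simpa using sub_dvd_pow_sub_pow ((X : Polynomial ℤ) ^ p) 1 q
    rw [e, ht]
    refine sub_mem hXn1 ?_
    rw [show (X : Polynomial ℤ) ^ k * (((X : Polynomial ℤ) ^ p - 1) * t) =
      ((X : Polynomial ℤ) ^ p - 1) * (X ^ k * t) by ring]
    exact Ideal.mul_mem_right _ _ hXpI
  have hXmI : (X : Polynomial ℤ) ^ m - 1 ∈ I := by
    rw [hgcd]
    exact pow_gcd_sub_one_mem I X p k hXpI hXk
  have hX1ne : (X - 1 : Polynomial ℤ) ≠ 0 := fun hcon => by
    simpa using congrArg (Polynomial.eval 0) hcon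
  set G : Polynomial ℤ := ∑ j ∈ Finset.range A', ((X : Polynomial ℤ) ^ m) ^ j with hG
  have hdecomp : PhiP n = G * NP m := by
    apply mul_right_cancel₀ hX1ne
    rw [geom_mul_PhiP n, mul_assoc]
    rw [show NP m * ((X : Polynomial ℤ) - 1) = (X : Polynomial ℤ) ^ m - 1 from geom_sum_mul X m]
    rw [show G * ((X : Polynomial ℤ) ^ m - 1) = ((X : Polynomial ℤ) ^ m) ^ A' - 1 from
      geom_sum_mul ((X : Polynomial ℤ) ^ m) A']
    rw [← pow_mul, show m * A' = n + 1 by rw [Nat.mul_comm m A']; omega]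
  obtain ⟨g, hg⟩ : ((X : Polynomial ℤ) ^ m - 1) ∣ G - C (A' : ℤ) := by
    have he : G - C ((A' : ℤ)) = ∑ j ∈ Finset.range A', (((X : Polynomial ℤ) ^ m) ^ j - 1) := by
      rw [Finset.sum_sub_distrib]
      congr 1
      simp
    rw [he]
    exact Finset.dvd_sum (fun j _ => by simpa using sub_dvd_pow_sub_pow ((X : Polynomial ℤ) ^ m) 1 j)
  have hGsplit : G = C ((A' : ℤ)) + ((X : Polynomial ℤ) ^ m - 1) * g := by
    rw [← hg]; ring
  have hΦJ : PhiP n ∈ J := by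
    have : PhiP n = C ((A' : ℤ)) * NP m + ((X : Polynomial ℤ) ^ m - 1) * (g * NP m) := by
      rw [hdecomp, hGsplit]; ring
    rw [this]
    exact add_mem hANJ (Ideal.mul_mem_right _ _ hXmJ)
  have hANI : C ((A' : ℤ)) * NP m ∈ I := by
    have : C ((A' : ℤ)) * NP m = PhiP n - ((X : Polynomial ℤ) ^ m - 1) * (g * NP m) := by
      rw [hdecomp, hGsplit]; ring
    rw [this]
    exact sub_mem hΦI (Ideal.mul_mem_right _ _ hXmI)
  have hXpJ : (X : Polynomial ℤ) ^ p - 1 ∈ J := by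
    obtain ⟨t, ht⟩ := hmp
    obtain ⟨s, hs⟩ : (X : Polynomial ℤ) ^ m - 1 ∣ (X : Polynomial ℤ) ^ p - 1 := by
      have := sub_dvd_pow_sub_pow ((X : Polynomial ℤ) ^ m) 1 t
      rw [← pow_mul, ← ht, one_pow] at this
      exact this
    rw [hs]
    exact Ideal.mul_mem_right _ _ hXmJ
  apply le_antisymm
  · rw [hII, Ideal.span_le]
    intro f hf
    simp only [Set.mem_insert_iff, Set.mem_singleton_iff] at hf
    rcases hf with rfl | rfl
    · exact hΦJ
    · exact hXpJ
  · rw [hJJ, Ideal.span_le]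
    intro f hf
    simp only [Set.mem_insert_iff, Set.mem_singleton_iff] at hf
    rcases hf with rfl | rfl
    · exact hXmI
    · exact hANI

end Stmt5Aux
end

theorem stmt5 (n p k m a b c : ℕ) (hn : Odd n) (hp : 0 < p) (hple : p ≤ (n + 1) / 2)
    (hpe : Even p) (hk : 0 < k) (hkp : k ≤ p) (hcong : n + 1 ≡ k [MOD p])
    (hm : m = Nat.gcd p k) (hab : n = a * m + b) (hb : b < m)
    (hc1 : 1 ≤ c) (hc2 : c ≤ m) (hcc : n + 1 - p ≡ c [MOD m]) :
    Nonempty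
      (((Fin n → ℤ) ⧸ LinearMap.range
          ((1 : Module.End ℤ (Fin n → ℤ)) - (phiA n) ^ p)) ≃+
        ((Fin m → ℤ) ⧸ Submodule.span ℤ
          ({Pi.single (⟨c - 1, by omega⟩ : Fin m) (1 : ℤ) +
            fun j : Fin m => if (j : ℕ) + 1 ≤ b then (a : ℤ) + 1 else (a : ℤ)} :
              Set (Fin m → ℤ)))) := by
  obtain ⟨t, ht⟩ := hn
  have hn0 : 0 < n := by omega
  have hkle : k ≤ n + 1 := by omega
  have hpk : p ∣ n + 1 - k := (Nat.modEq_iff_dvd' hkle).mp hcong.symm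
  have hmp : m ∣ p := hm ▸ Nat.gcd_dvd_left p k
  have hmk : m ∣ k := hm ▸ Nat.gcd_dvd_right p k
  have hm0 : 0 < m := hm ▸ Nat.gcd_pos_of_pos_left k hp
  have hmn1 : m ∣ n + 1 := by
    have h1 : m ∣ n + 1 - k := dvd_trans hmp hpk
    rw [show n + 1 = (n + 1 - k) + k by omega]
    exact dvd_add h1 hmk
  have hbm : b + 1 = m := by
    have hd : m ∣ b + 1 := by
      have h2 : m ∣ a * m + (b + 1) := by
        rw [show a * m + (b + 1) = n + 1 by omega]
        exact hmn1
      exact (Nat.dvd_add_right ⟨a, Nat.mul_comm a m⟩).mp h2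
    have := Nat.le_of_dvd (by omega) hd
    omega
  have hA : n + 1 = (a + 1) * m := by
    have h' : (a + 1) * m = a * m + m := by ring
    rw [h', hab]
    linarith
  have hcm : c = m := by
    have hmd : m ∣ n + 1 - p := Nat.dvd_sub hmn1 hmp
    have h0 : (n + 1 - p) % m = 0 := by
      obtain ⟨q, hq⟩ := hmd
      rw [hq, Nat.mul_mod_right]
    have hcmod : c % m = 0 := by
      have h3 := hcc
      unfold Nat.ModEq at h3
      omega
    have h4 : m ∣ c := Nat.dvd_of_mod_eq_zero hcmod
    have := Nat.le_of_dvd (by omega) h4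
    omega
  have hvec : (Pi.single (⟨c - 1, by omega⟩ : Fin m) (1 : ℤ) +
      fun j : Fin m => if (j : ℕ) + 1 ≤ b then (a : ℤ) + 1 else (a : ℤ)) =
      (fun _ : Fin m => (((a + 1 : ℕ)) : ℤ)) := by
    funext j
    simp only [Pi.add_apply, Pi.single_apply]
    by_cases hj : j = (⟨c - 1, by omega⟩ : Fin m)
    · have hjv : (j : ℕ) = c - 1 := by rw [hj]
      rw [if_pos hj, if_neg (by omega)]
      push_cast
      ring
    · have hjv : (j : ℕ) ≠ c - 1 := fun hcon => hj (Fin.ext hcon)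
      have hjlt : (j : ℕ) < m := j.isLt
      rw [if_neg hj, if_pos (by omega)]
      push_cast
      ring
  obtain ⟨e1⟩ := Stmt5Aux.equiv_n n p hn0
  obtain ⟨e2⟩ := Stmt5Aux.equiv_m m hm0 (((a + 1 : ℕ)) : ℤ)
  have hideq := Stmt5Aux.ideal_eq n p k m (a + 1) hm0 hA hkle hpk hm
  have hspan : Submodule.span ℤ ({fun _ : Fin m => (((a + 1 : ℕ)) : ℤ)} : Set (Fin m → ℤ)) =
      Submodule.span ℤ
        ({Pi.single (⟨c - 1, by omega⟩ : Fin m) (1 : ℤ) +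
          fun j : Fin m => if (j : ℕ) + 1 ≤ b then (a : ℤ) + 1 else (a : ℤ)} :
            Set (Fin m → ℤ)) := by
    rw [hvec]
  exact ⟨e1.toAddEquiv.trans ((Submodule.quotEquivOfEq _ _ hideq).toAddEquiv.trans
    (e2.toAddEquiv.symm.trans (Submodule.quotEquivOfEq _ _ hspan).toAddEquiv))⟩
end

section
/- Let n be odd and suppose p ≥ 1 satisfies p ≡ 1 (mod n+1) or p ≡ −1 (mod n+1). Then G_{n,p} = ℤ^n / Im(1 + φ^p) is isomorphic to ℤ. (Such p is necessarily odd since n+1 is even.) -/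
lemma phiA_single_lt {n : ℕ} (i : Fin n) (h : (i : ℕ) + 1 < n) :
    phiA n (Pi.single i 1) = Pi.single (⟨(i : ℕ) + 1, h⟩ : Fin n) 1 := by
  rw [phiA_single, dif_pos h]

lemma phiA_single_last {n : ℕ} (i : Fin n) (h : ¬ ((i : ℕ) + 1 < n)) :
    phiA n (Pi.single i 1) = fun _ => -1 := by
  rw [phiA_single, dif_neg h]

lemma phiA_ones (m : ℕ) :
    phiA (m+1) (fun _ => (1:ℤ))
      = (fun _ => 1) - Pi.single (0 : Fin (m+1)) 1 - (fun _ => 1) := by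
  have h1 : (fun _ => (1:ℤ)) = ∑ i : Fin (m+1), Pi.single i (1:ℤ) := (Finset.univ_sum_single _).symm
  conv_lhs => rw [h1]
  rw [map_sum]
  rw [Fin.sum_univ_castSucc]
  have hlast : ¬ ((Fin.last m : ℕ) + 1 < m + 1) := by simp [Fin.last]
  rw [phiA_single_last _ hlast]
  have hcast : ∀ i : Fin m, phiA (m+1) (Pi.single (Fin.castSucc i) 1)
      = Pi.single (Fin.succ i) (1:ℤ) := by
    intro i
    have h : ((Fin.castSucc i : Fin (m+1)) : ℕ) + 1 < m + 1 := by
      simp [Fin.castSucc, Fin.isLt, Nat.succ_lt_succ i.isLt]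
    rw [phiA_single_lt _ h]
    congr 1
  simp_rw [hcast]
  have h2 : ∑ i : Fin m, Pi.single (Fin.succ i) (1:ℤ) =
      ((fun _ => 1) - Pi.single (0 : Fin (m+1)) 1 : Fin (m+1) → ℤ) := by
    have := Fin.sum_univ_succ (fun j : Fin (m+1) => Pi.single j (1:ℤ))
    rw [Finset.univ_sum_single] at this
    rw [eq_sub_iff_add_eq, this]
    exact add_comm _ _
  rw [h2]
  funext j
  simp
  ring

lemma phiA_pow_single_s7 (n : ℕ) : ∀ (k : ℕ) (h : k < n),
    ((phiA n) ^ k) (Pi.single (⟨0, Nat.lt_of_le_of_lt (Nat.zero_le k) h⟩ : Fin n) 1)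
      = Pi.single (⟨k, h⟩ : Fin n) 1 := by
  intro k
  induction k with
  | zero => intro h; simp
  | succ k ih =>
      intro h
      have hk : k < n := Nat.lt_of_succ_lt h
      rw [pow_succ', Module.End.mul_apply, ih hk, phiA_single_lt ⟨k, hk⟩ h]

lemma phiA_pow_n (n : ℕ) (hn : 0 < n) :
    ((phiA n) ^ n) (Pi.single (⟨0, hn⟩ : Fin n) 1) = fun _ => -1 := by
  obtain ⟨m, rfl⟩ : ∃ m, n = m + 1 := ⟨n - 1, (Nat.succ_pred_eq_of_pos hn).symm⟩
  rw [pow_succ', Module.End.mul_apply,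
    phiA_pow_single_s7 (m+1) m (Nat.lt_succ_self m)]
  exact phiA_single_last _ (by simp)

lemma phiA_pow_succ_n (n : ℕ) (hn : 0 < n) :
    ((phiA n) ^ (n+1)) (Pi.single (⟨0, hn⟩ : Fin n) 1) = Pi.single (⟨0, hn⟩ : Fin n) 1 := by
  rw [pow_succ', Module.End.mul_apply, phiA_pow_n n hn]
  obtain ⟨m, rfl⟩ : ∃ m, n = m + 1 := ⟨n - 1, (Nat.succ_pred_eq_of_pos hn).symm⟩
  have h : (fun _ => (-1:ℤ)) = (-(fun _ => (1:ℤ)) : Fin (m+1) → ℤ) := by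
    funext; simp
  rw [h, map_neg, phiA_ones m]
  funext j
  simp [Pi.single_apply]

lemma phiA_pow_succ_n_eq_one (n : ℕ) (hn : 0 < n) :
    (phiA n) ^ (n + 1) = 1 := by
  apply (Pi.basisFun ℤ (Fin n)).ext
  intro i
  rw [Pi.basisFun_apply]
  have hi : Pi.single i (1:ℤ) = ((phiA n) ^ (i:ℕ)) (Pi.single (⟨0, hn⟩ : Fin n) 1) := by
    rw [phiA_pow_single_s7 n i i.isLt]
  rw [hi]
  show (((phiA n) ^ (n+1)) * ((phiA n) ^ (i:ℕ))) _ = (1 : Module.End ℤ (Fin n → ℤ)) _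
  rw [← pow_add, add_comm, pow_add, Module.End.mul_apply, phiA_pow_succ_n n hn]
  simp

/-- The alternating-sum functional `x ↦ ∑ i, (-1)^i x i`. -/
def fAlt (n : ℕ) : (Fin n → ℤ) →ₗ[ℤ] ℤ where
  toFun x := ∑ i : Fin n, (-1:ℤ)^(i:ℕ) * x i
  map_add' x y := by
    simp [mul_add, Finset.sum_add_distrib]
  map_smul' c x := by
    simp only [Pi.smul_apply, smul_eq_mul, RingHom.id_apply, Finset.mul_sum]
    exact Finset.sum_congr rfl (fun i _ => by ring)

lemma fAlt_apply {n : ℕ} (x : Fin n → ℤ) : fAlt n x = ∑ i : Fin n, (-1:ℤ)^(i:ℕ) * x i := rfl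

lemma fAlt_single {n : ℕ} (j : Fin n) (c : ℤ) :
    fAlt n (Pi.single j c) = (-1)^(j:ℕ) * c := by
  rw [fAlt_apply, Finset.sum_eq_single j]
  · simp
  · intro i _ hij; rw [Pi.single_eq_of_ne hij, mul_zero]
  · intro h; exact absurd (Finset.mem_univ j) h

lemma altsum_range (m : ℕ) :
    ∑ i ∈ Finset.range m, (-1:ℤ)^i = if Even m then 0 else 1 := by
  induction m with
  | zero => simp
  | succ k ih =>
      rw [Finset.sum_range_succ, ih]
      rcases Nat.even_or_odd k with h | h
      · simp [h, Even.neg_one_pow h, Nat.even_add_one, h]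
      · simp [Nat.not_even_iff_odd.mpr h, Odd.neg_one_pow h, Nat.even_add_one,
          Nat.not_even_iff_odd.mpr h]

lemma fAlt_ones {n : ℕ} (hn : Odd n) : fAlt n (fun _ => (-1:ℤ)) = -1 := by
  rw [fAlt_apply]
  simp only [mul_neg, mul_one, ← Finset.sum_neg_distrib]
  rw [Fin.sum_univ_eq_sum_range (fun i => -(-1:ℤ)^i)]
  simp only [Finset.sum_neg_distrib]
  rw [altsum_range, if_neg (Nat.not_even_iff_odd.mpr hn)]

lemma fAlt_phiA {n : ℕ} (hn : Odd n) (x : Fin n → ℤ) :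
    fAlt n (phiA n x) = - fAlt n x := by
  have key : (fAlt n).comp (phiA n : (Fin n → ℤ) →ₗ[ℤ] (Fin n → ℤ)) = - fAlt n := by
    apply (Pi.basisFun ℤ (Fin n)).ext
    intro i
    rw [Pi.basisFun_apply, LinearMap.comp_apply, LinearMap.neg_apply]
    by_cases h : (i : ℕ) + 1 < n
    · rw [show (phiA n : (Fin n → ℤ) →ₗ[ℤ] (Fin n → ℤ)) (Pi.single i 1)
          = Pi.single (⟨(i:ℕ)+1, h⟩ : Fin n) 1 from phiA_single_lt i h,
        fAlt_single, fAlt_single]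
      simp [pow_succ]
    · rw [show (phiA n : (Fin n → ℤ) →ₗ[ℤ] (Fin n → ℤ)) (Pi.single i 1)
          = (fun _ => -1) from phiA_single_last i h,
        fAlt_ones hn, fAlt_single]
      have hi : (i : ℕ) = n - 1 := by omega
      have heven : Even ((i:ℕ)) := by
        rw [hi]; exact Nat.Odd.sub_odd hn odd_one
      rw [Even.neg_one_pow heven, mul_one]
  calc fAlt n (phiA n x) = ((fAlt n).comp (phiA n : (Fin n → ℤ) →ₗ[ℤ] (Fin n → ℤ))) x := rfl
    _ = (- fAlt n) x := by rw [key]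
    _ = - fAlt n x := rfl

lemma fAlt_phiA_pow {n : ℕ} (hn : Odd n) (k : ℕ) (x : Fin n → ℤ) :
    fAlt n (((phiA n)^k) x) = (-1)^k * fAlt n x := by
  induction k generalizing x with
  | zero => simp
  | succ k ih =>
      rw [pow_succ', Module.End.mul_apply, fAlt_phiA hn, ih, pow_succ]
      ring

lemma ker_subset_of_gens {n : ℕ} (hn : 0 < n) (R : Submodule ℤ (Fin n → ℤ))
    (hgen : ∀ (k : ℕ) (h : k + 1 < n),
      Pi.single (⟨k, Nat.lt_of_succ_lt h⟩ : Fin n) (1:ℤ) + Pi.single (⟨k+1, h⟩ : Fin n) 1 ∈ R)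
    (x : Fin n → ℤ) (hx : fAlt n x = 0) : x ∈ R := by
  set e0 : Fin n → ℤ := Pi.single (⟨0, hn⟩ : Fin n) 1 with he0
  have step : ∀ (k : ℕ) (h : k < n),
      Pi.single (⟨k, h⟩ : Fin n) (1:ℤ) - ((-1:ℤ)^k) • e0 ∈ R := by
    intro k
    induction k with
    | zero => intro h; simp [he0]
    | succ k ih =>
        intro h
        have hk : k < n := Nat.lt_of_succ_lt h
        have h1 := hgen k h
        have h2 := ih hk
        have : Pi.single (⟨k+1, h⟩ : Fin n) (1:ℤ) - ((-1:ℤ)^(k+1)) • e0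
            = (Pi.single (⟨k, hk⟩ : Fin n) (1:ℤ) + Pi.single (⟨k+1, h⟩ : Fin n) 1)
              - (Pi.single (⟨k, hk⟩ : Fin n) (1:ℤ) - ((-1:ℤ)^k) • e0) := by
          rw [pow_succ]
          module
        rw [this]
        exact R.sub_mem h1 h2
  have hx2 : x = ∑ i : Fin n, x i • (Pi.single i (1:ℤ) - ((-1:ℤ)^(i:ℕ)) • e0) := by
    have hsum : ∑ i : Fin n, x i • (Pi.single i (1:ℤ) - ((-1:ℤ)^(i:ℕ)) • e0)
        = (∑ i : Fin n, Pi.single i (x i)) - (∑ i : Fin n, ((-1:ℤ)^(i:ℕ) * x i)) • e0 := by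
      simp only [smul_sub, smul_smul]
      rw [Finset.sum_sub_distrib, Finset.sum_smul]
      congr 1
      · exact Finset.sum_congr rfl (fun i _ => by
          rw [← Pi.single_smul, smul_eq_mul, mul_one])
      · exact Finset.sum_congr rfl (fun i _ => by rw [mul_comm])
    rw [hsum, Finset.univ_sum_single, ← fAlt_apply, hx, zero_smul, sub_zero]
  rw [hx2]
  exact Submodule.sum_mem R (fun i _ => Submodule.smul_mem R _
    (by simpa using step (i : ℕ) i.isLt))

theorem stmt7 (n p : ℕ) (hn : Odd n) (hp : 1 ≤ p)
    (hp1 : p ≡ 1 [MOD n + 1] ∨ p ≡ n [MOD n + 1]) :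
    Odd p ∧
    Nonempty
      (((Fin n → ℤ) ⧸ LinearMap.range
          ((1 : Module.End ℤ (Fin n → ℤ)) + (phiA n) ^ p)) ≃+ ℤ) := by
  have hnpos : 0 < n := hn.pos
  have hn1 : 1 < n + 1 := by omega
  have heven : Even (n + 1) := Odd.add_one hn
  -- p mod (n+1)
  have hmod : p % (n + 1) = 1 ∨ p % (n + 1) = n := by
    rcases hp1 with h | h
    · left; rw [Nat.ModEq] at h; rwa [Nat.mod_eq_of_lt hn1] at h
    · right; rw [Nat.ModEq] at h; rwa [Nat.mod_eq_of_lt (Nat.lt_succ_self n)] at h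
  have hdecomp : p = (n + 1) * (p / (n + 1)) + p % (n + 1) :=
    (Nat.div_add_mod p (n + 1)).symm
  have hoddp : Odd p := by
    rw [hdecomp]
    refine Even.add_odd (heven.mul_right _) ?_
    rcases hmod with h | h <;> rw [h]
    · exact odd_one
    · exact hn
  refine ⟨hoddp, ?_⟩
  -- φ^p is φ or φ^n
  have hpow : (phiA n) ^ p = phiA n ∨ (phiA n) ^ p = (phiA n) ^ n := by
    have hbase : (phiA n) ^ p = (phiA n) ^ (p % (n+1)) := by
      conv_lhs => rw [hdecomp]
      rw [pow_add, pow_mul, phiA_pow_succ_n_eq_one n hnpos, one_pow, one_mul]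
    rcases hmod with h | h
    · left; rw [hbase, h, pow_one]
    · right; rw [hbase, h]
  set A : Module.End ℤ (Fin n → ℤ) := 1 + (phiA n) ^ p with hA
  -- range A = ker fAlt
  have hrange : LinearMap.range A = LinearMap.ker (fAlt n) := by
    apply le_antisymm
    · rintro y ⟨x, rfl⟩
      rw [LinearMap.mem_ker, hA, LinearMap.add_apply, Module.End.one_apply, map_add,
        fAlt_phiA_pow hn, Odd.neg_one_pow hoddp]
      ring
    · intro x hx
      rw [LinearMap.mem_ker] at hx
      apply ker_subset_of_gens hnpos _ _ x hx
      intro k h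
      rcases hpow with hc | hc
      · exact ⟨Pi.single (⟨k, Nat.lt_of_succ_lt h⟩ : Fin n) 1, by
          rw [hA, hc, LinearMap.add_apply, Module.End.one_apply,
            phiA_single_lt (⟨k, Nat.lt_of_succ_lt h⟩ : Fin n) h]⟩
      · refine ⟨Pi.single (⟨k+1, h⟩ : Fin n) 1, ?_⟩
        rw [hA, hc, LinearMap.add_apply, Module.End.one_apply]
        have hkey : ((phiA n)^n) (Pi.single (⟨k+1, h⟩ : Fin n) (1:ℤ))
            = Pi.single (⟨k, Nat.lt_of_succ_lt h⟩ : Fin n) 1 := by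
          rw [show Pi.single (⟨k+1, h⟩ : Fin n) (1:ℤ)
              = ((phiA n) ^ (k+1)) (Pi.single (⟨0, hnpos⟩ : Fin n) 1)
            from (phiA_pow_single_s7 n (k+1) h).symm]
          rw [← Module.End.mul_apply, ← pow_add,
            show n + (k+1) = (n+1) + k by omega, pow_add,
            phiA_pow_succ_n_eq_one n hnpos, one_mul,
            phiA_pow_single_s7 n k (Nat.lt_of_succ_lt h)]
        rw [hkey, add_comm]
  have hsurj : Function.Surjective (fAlt n) := by
    intro z
    exact ⟨Pi.single (⟨0, hnpos⟩ : Fin n) z, by rw [fAlt_single]; simp⟩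
  exact ⟨((Submodule.quotEquivOfEq _ _ hrange).trans
    ((fAlt n).quotKerEquivOfSurjective hsurj)).toAddEquiv⟩
end

section
/- Suppose n is even and p ≥ 1 satisfies p ≡ 1 (mod 2(n+1)) or p ≡ −1 (mod 2(n+1)). Then G_{n,p} = ℤ^n / Im(1 + φ^p) is the trivial group 0. -/
namespace Stmt12Aux

lemma phiA_single (n : ℕ) (j : Fin n) :
    phiA n (Pi.single j 1) =
      if h : (j : ℕ) + 1 < n then Pi.single (⟨(j : ℕ) + 1, h⟩ : Fin n) 1 else fun _ => -1 := by
  rw [← Pi.basisFun_apply, phiA, Module.Basis.constr_basis]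

noncomputable def vv (m : ℕ) (k : ZMod (m + 2)) : Fin (m + 1) → ℤ :=
  if h : k.val < m + 1 then Pi.single (⟨k.val, h⟩ : Fin (m + 1)) 1 else fun _ => -1

variable {m : ℕ}

lemma sum_single : ∑ j : Fin (m + 1), Pi.single j (1 : ℤ) = fun _ => 1 :=
  Finset.univ_sum_single (fun _ => (1 : ℤ))

lemma phi_vv (k : ZMod (m + 2)) : phiA (m + 1) (vv m k) = vv m (k + 1) := by
  have hklt : k.val < m + 2 := ZMod.val_lt k
  haveI : Fact (1 < m + 2) := ⟨by omega⟩
  have hone : (1 : ZMod (m + 2)).val = 1 := ZMod.val_one _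
  by_cases h : k.val < m + 1
  · have hadd : (k + 1).val = k.val + 1 := by
      rw [ZMod.val_add_of_lt (by rw [hone]; omega), hone]
    rw [vv, dif_pos h, phiA_single, vv, hadd]
  · have hk : k.val = m + 1 := by omega
    have hk1 : k + 1 = 0 := by
      have : k = ((m + 1 : ℕ) : ZMod (m + 2)) := by
        rw [← ZMod.natCast_rightInverse k, hk]
      rw [this]
      exact ZMod.natCast_self' (m + 1)
    rw [vv, dif_neg (by omega), hk1, vv]
    have h0 : (0 : ZMod (m + 2)).val = 0 := ZMod.val_zero
    rw [dif_pos (by omega)]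
    -- φ (fun _ => -1) = Pi.single 0 1
    have hneg : (fun _ => (-1 : ℤ) : Fin (m + 1) → ℤ) = -(∑ j : Fin (m + 1), Pi.single j 1) := by
      rw [sum_single]; rfl
    rw [hneg, map_neg, map_sum]
    have hterms : ∑ j : Fin (m + 1), phiA (m + 1) (Pi.single j 1)
        = (∑ j : Fin m, Pi.single (Fin.succ j) (1 : ℤ)) + (fun _ => -1) := by
      simp_rw [phiA_single]
      rw [Fin.sum_univ_castSucc]
      congr 1
      · apply Finset.sum_congr rfl
        intro j _
        rw [dif_pos (by simp)]
        congr 1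
      · rw [dif_neg (by simp)]
    have hsucc : (∑ j : Fin m, Pi.single (Fin.succ j) (1 : ℤ) : Fin (m + 1) → ℤ) =
        (fun _ => 1) - Pi.single 0 1 := by
      have := Fin.sum_univ_succ (fun i : Fin (m + 1) => Pi.single i (1 : ℤ))
      rw [sum_single] at this
      rw [this]; abel
    rw [hterms, hsucc]
    have hz : Fin.mk 0 (Nat.lt_of_lt_of_le Nat.zero_lt_one (Nat.le_add_left 1 m)) = (0 : Fin (m+1)) := rfl
    funext x
    simp [Pi.single_apply]

lemma pow_vv (p : ℕ) (k : ZMod (m + 2)) :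
    ((phiA (m + 1)) ^ p) (vv m k) = vv m (k + (p : ZMod (m + 2))) := by
  induction p generalizing k with
  | zero => simp
  | succ q ih =>
      rw [pow_succ, Module.End.mul_apply, phi_vv, ih]
      push_cast
      ring_nf

lemma cast_bij : Function.Bijective (fun i : Fin (m + 2) => ((i : ℕ) : ZMod (m + 2))) := by
  constructor
  · intro a b hab
    have := congrArg ZMod.val hab
    simp only [ZMod.val_cast_of_lt a.isLt, ZMod.val_cast_of_lt b.isLt] at this
    exact Fin.ext this
  · intro z
    exact ⟨⟨z.val, ZMod.val_lt z⟩, ZMod.natCast_rightInverse z⟩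

lemma vv_coe (j : Fin (m + 1)) : vv m ((j : ℕ) : ZMod (m + 2)) = Pi.single j 1 := by
  have hv : (((j : ℕ) : ZMod (m + 2))).val = (j : ℕ) := ZMod.val_cast_of_lt (by omega)
  rw [vv, dif_pos (by rw [hv]; exact j.isLt)]
  exact congrArg (fun i : Fin (m + 1) => Pi.single i (1 : ℤ)) (Fin.ext hv)

lemma sum_vv : ∑ z : ZMod (m + 2), vv m z = 0 := by
  rw [← Function.Bijective.sum_comp cast_bij (vv m)]
  rw [Fin.sum_univ_castSucc]
  have h1 : ∀ j : Fin (m + 1), vv m (((Fin.castSucc j : Fin (m + 2)) : ℕ) : ZMod (m + 2))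
      = Pi.single j 1 := by
    intro j
    have hco : ((Fin.castSucc j : Fin (m + 2)) : ℕ) = (j : ℕ) := rfl
    have hv : ((((Fin.castSucc j : Fin (m + 2)) : ℕ) : ZMod (m + 2))).val = (j : ℕ) := by
      rw [hco]; exact ZMod.val_cast_of_lt (by omega)
    rw [vv, dif_pos (by rw [hv]; exact j.isLt)]
    exact congrArg (fun i : Fin (m + 1) => Pi.single i (1 : ℤ)) (Fin.ext hv)
  have h2 : vv m (((Fin.last (m + 1) : Fin (m + 2)) : ℕ) : ZMod (m + 2)) = fun _ => -1 := by
    rw [vv, dif_neg]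
    rw [ZMod.val_cast_of_lt (by simp)]
    simp
  simp_rw [h1, h2, sum_single]
  funext x
  simp

lemma sum_shift (c s : ZMod (m + 2)) (hs : s = 1 ∨ s = -1) :
    ∑ j ∈ Finset.range (m + 2), vv m (c + s * (j : ℕ)) = 0 := by
  have hre : ∑ j ∈ Finset.range (m + 2), vv m (c + s * (j : ℕ))
      = ∑ z : ZMod (m + 2), vv m (c + s * z) := by
    rw [← Fin.sum_univ_eq_sum_range (fun j => vv m (c + s * (j : ℕ))) (m + 2)]
    exact (Function.Bijective.sum_comp cast_bij (fun z => vv m (c + s * z)))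
  rw [hre]
  rcases hs with rfl | rfl
  · simp_rw [one_mul]
    rw [← sum_vv (m := m)]
    exact Equiv.sum_comp (Equiv.addLeft c) (vv m)
  · simp_rw [neg_one_mul, ← sub_eq_add_neg]
    rw [← sum_vv (m := m)]
    exact Equiv.sum_comp (Equiv.subLeft c) (vv m)

lemma pair_sum (s c : ZMod (m + 2)) (u : ℕ) :
    vv m c + ∑ t ∈ Finset.range u,
        (vv m (c + s * ((2 * t + 1 : ℕ) : ZMod (m + 2)))
          + vv m (c + s * ((2 * t + 2 : ℕ) : ZMod (m + 2))))
      = ∑ j ∈ Finset.range (2 * u + 1), vv m (c + s * (j : ℕ)) := by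
  induction u with
  | zero => simp
  | succ q ih =>
      rw [Finset.sum_range_succ, ← add_assoc, ih]
      conv_rhs => rw [show 2 * (q + 1) + 1 = (2 * q + 1) + 1 + 1 from by omega,
        Finset.sum_range_succ, Finset.sum_range_succ,
        show (2 * q + 1) + 1 = 2 * q + 2 from by omega]
      abel

end Stmt12Aux

open Stmt12Aux

theorem stmt12 (n p : ℕ) (hn : Even n) (hn1 : 1 ≤ n) (hp : 1 ≤ p)
    (hp1 : p ≡ 1 [MOD 2 * (n + 1)] ∨ p ≡ 2 * n + 1 [MOD 2 * (n + 1)]) :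
    Subsingleton
      ((Fin n → ℤ) ⧸ LinearMap.range
        ((1 : Module.End ℤ (Fin n → ℤ)) + (phiA n) ^ p)) := by

  obtain ⟨m, rfl⟩ : ∃ m, n = m + 1 := ⟨n - 1, by omega⟩
  obtain ⟨u, hu⟩ : ∃ u, m + 1 = 2 * u := by
    obtain ⟨u, hu⟩ := hn; exact ⟨u, by omega⟩
  set s : ZMod (m + 2) := (p : ZMod (m + 2)) with hs_def
  have hs : s = 1 ∨ s = -1 := by
    rcases hp1 with h | h
    · left
      have h' : p ≡ 1 [MOD m + 2] := Nat.ModEq.of_dvd ⟨2, by ring⟩ h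
      have := (ZMod.natCast_eq_natCast_iff p 1 (m + 2)).mpr h'
      rw [hs_def, this, Nat.cast_one]
    · right
      have h' : p ≡ 2 * (m + 1) + 1 [MOD m + 2] := Nat.ModEq.of_dvd ⟨2, by ring⟩ h
      have h2 := (ZMod.natCast_eq_natCast_iff p (2 * (m + 1) + 1) (m + 2)).mpr h'
      have h3 : ((2 * (m + 1) + 1 : ℕ) : ZMod (m + 2)) + 1 = 0 := by
        have h4 : ((2 * (m + 1) + 1 : ℕ) : ZMod (m + 2)) + 1
            = ((2 * (m + 2) : ℕ) : ZMod (m + 2)) := by push_cast; ring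
        rw [h4, Nat.cast_mul, ZMod.natCast_self, mul_zero]
      rw [hs_def, h2]
      exact eq_neg_of_add_eq_zero_left h3
  rw [Submodule.Quotient.subsingleton_iff, eq_top_iff,
    ← (Pi.basisFun ℤ (Fin (m + 1))).span_eq, Submodule.span_le]
  rintro x hx
  obtain ⟨i, rfl⟩ := hx
  simp only [SetLike.mem_coe, Pi.basisFun_apply]
  set c : ZMod (m + 2) := ((i : ℕ) : ZMod (m + 2)) with hc
  rw [← vv_coe i, ← hc]
  have key : vv m c + ∑ t ∈ Finset.range u,
      (vv m (c + s * ((2 * t + 1 : ℕ) : ZMod (m + 2)))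
        + vv m (c + s * ((2 * t + 2 : ℕ) : ZMod (m + 2)))) = 0 := by
    rw [pair_sum, show 2 * u + 1 = m + 2 from by omega]
    exact sum_shift c s hs
  refine ⟨-∑ t ∈ Finset.range u, vv m (c + s * ((2 * t + 1 : ℕ) : ZMod (m + 2))), ?_⟩
  rw [LinearMap.add_apply, Module.End.one_apply, map_neg, map_sum]
  simp_rw [pow_vv]
  have harg : ∀ t : ℕ, c + s * ((2 * t + 1 : ℕ) : ZMod (m + 2)) + (p : ZMod (m + 2))
      = c + s * ((2 * t + 2 : ℕ) : ZMod (m + 2)) := by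
    intro t
    rw [← hs_def]
    push_cast
    ring
  simp_rw [harg]
  rw [← neg_add, ← Finset.sum_add_distrib]
  rw [eq_neg_of_add_eq_zero_right key, neg_neg]
end

section
/- Let n be even, let 0 < p ≤ n+1 with p odd and p ≢ ±1 (mod 2(n+1)), let k be the unique integer with 0 < k ≤ p and 2(n+1) ≡ k (mod p), and set m = gcd(p, k). Write n = am + b with 0 ≤ b < m, and write n+1−p = tm + c with 1 ≤ c ≤ m. If p/m is even, then G_{n,p} = ℤ^n / Im(1 + φ^p) is isomorphic to the quotient of the free abelian group on x_1, …, x_m by the single relation (−1)^t x_c − Σ_{j=1}^{b} x_j = 0 when a is even, and by the single relation (−1)^t x_c − Σ_{j=b+1}^{m} x_j = 0 when a is odd. If p/m is odd, then G_{n,p} is isomorphic to the quotient of the free abelian group on x_1, …, x_m by the relations 2x_j = 0 for all 1 ≤ j ≤ m together with (−1)^t x_c − Σ_{j=1}^{b} x_j = 0 when a is even, respectively (−1)^t x_c − Σ_{j=b+1}^{m} x_j = 0 when a is odd. -/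
set_option linter.unusedSectionVars false
set_option linter.unusedVariables false
open Polynomial Finset

section helpers
variable {R : Type*} [CommRing R] [Nontrivial R]

lemma degree_geomSum_lt (k : ℕ) : (∑ i ∈ range k, (X:R[X])^i).degree < (k : ℕ) := by
  apply lt_of_le_of_lt (degree_sum_le _ _)
  rw [Finset.sup_lt_iff (by exact_mod_cast WithBot.bot_lt_coe k)]
  intro i hi
  rw [degree_X_pow]
  exact_mod_cast mem_range.mp hi

lemma natDegree_geomSum (k : ℕ) : (∑ i ∈ range (k+1), (X:R[X])^i).natDegree = k := by
  rw [Finset.sum_range_succ]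
  have h := degree_geomSum_lt (R := R) k
  rw [← degree_X_pow (R := R) k] at h
  rw [add_comm, natDegree_eq_of_degree_eq_some]
  rw [degree_add_eq_left_of_degree_lt h, degree_X_pow]

lemma dvd_pow_sub_one {x : R} {a b : ℕ} (h : a ∣ b) : x^a - 1 ∣ x^b - 1 := by
  obtain ⟨c, rfl⟩ := h
  rw [pow_mul]
  simpa using sub_dvd_pow_sub_pow (x^a) 1 c

lemma dvd_pow_gcd_sub_one {d x : R} (a b : ℕ) (ha : d ∣ x^a - 1) (hb : d ∣ x^b - 1) :
    d ∣ x^(Nat.gcd a b) - 1 := by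
  induction a, b using Nat.gcd.induction with
  | H0 n => simpa using hb
  | H1 a b hpos ih =>
    rw [Nat.gcd_rec]
    apply ih ?_ ha
    have hx : x ^ (b % a) * (x ^ a) ^ (b / a) = x ^ b := by
      rw [← pow_mul, ← pow_add, Nat.mod_add_div]
    have key : x ^ (b % a) - 1 = (x^b - 1) - x^(b % a) * ((x^a)^(b / a) - 1) := by
      linear_combination hx
    rw [key]
    exact dvd_sub hb ((ha.trans (by simpa using sub_dvd_pow_sub_pow (x^a) 1 (b / a))).mul_left _)
end helpers


lemma target_aux (m : ℕ) (hm : 0 < m) :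
    Nonempty (((Fin m → ℤ) ⧸ Submodule.span ℤ
      (insert (fun _ => (-1:ℤ)) (Set.range fun j : Fin m => (2:ℤ) • Pi.single j (1:ℤ))))
      ≃+ (Fin (m-1) → ZMod 2)) := by
  classical
  set S : Set (Fin m → ℤ) :=
    insert (fun _ => (-1:ℤ)) (Set.range fun j : Fin m => (2:ℤ) • Pi.single j (1:ℤ)) with hS
  let last : Fin m := ⟨m-1, by omega⟩
  let f : (Fin m → ℤ) →ₗ[ℤ] (Fin (m-1) → ZMod 2) :=
    { toFun := fun v j => ((v ⟨j, by omega⟩ : ℤ) : ZMod 2) - ((v last : ℤ) : ZMod 2)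
      map_add' := by intro v w; funext j; push_cast [Pi.add_apply]; ring
      map_smul' := by
        intro c v; funext j
        simp only [RingHom.id_apply, Pi.smul_apply, smul_eq_mul, zsmul_eq_mul]
        push_cast; ring }
  have hf : ∀ (v : Fin m → ℤ) (j : Fin (m-1)),
      f v j = ((v ⟨j, by omega⟩ : ℤ) : ZMod 2) - ((v last : ℤ) : ZMod 2) := fun _ _ => rfl
  have hsle : Submodule.span ℤ S ≤ LinearMap.ker f := by
    rw [Submodule.span_le]
    rintro x (rfl | ⟨j, rfl⟩) <;> rw [SetLike.mem_coe, LinearMap.mem_ker] <;> funext i <;>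
      rw [hf] <;> simp only [Pi.zero_apply, Pi.smul_apply, Pi.single_apply, smul_eq_mul,
        mul_ite, mul_one, mul_zero]
    · ring
    · split_ifs <;> push_cast <;> simp [show (2 : ZMod 2) = 0 from rfl]
  have hkerle : LinearMap.ker f ≤ Submodule.span ℤ S := by
    intro v hv
    rw [LinearMap.mem_ker] at hv
    have hu : ∀ i : Fin m, ∃ ci : ℤ, v i - v last = 2 * ci := by
      intro i
      by_cases h : (i:ℕ) < m - 1
      · have h1 := congrFun hv ⟨i, h⟩
        rw [hf] at h1
        simp only [Fin.eta, Pi.zero_apply] at h1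
        have h2 : ((v i - v last : ℤ) : ZMod 2) = 0 := by push_cast; exact h1
        obtain ⟨ci, hci⟩ := (ZMod.intCast_zmod_eq_zero_iff_dvd _ 2).mp h2
        exact ⟨ci, by exact_mod_cast hci⟩
      · have : i = last := by
          apply Fin.ext; have := i.isLt; simp only [last]; omega
        exact ⟨0, by rw [this]; ring⟩
    choose cf hc using hu
    have hv2 : v = (- v last) • (fun _ => (-1:ℤ)) +
        ∑ i : Fin m, cf i • ((2:ℤ) • Pi.single i (1:ℤ)) := by
      funext x
      simp only [Pi.add_apply, Finset.sum_apply, Pi.smul_apply, smul_eq_mul, Pi.single_apply,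
        mul_ite, mul_one, mul_zero]
      have hite : ∀ i : Fin m, cf i * (2 * if x = i then 1 else 0)
          = if x = i then cf i * 2 else 0 := fun i => by split_ifs <;> ring
      simp only [hite, Finset.sum_ite_eq, Finset.mem_univ, if_true]
      have := hc x
      linarith
    rw [hv2]
    refine Submodule.add_mem _ (Submodule.smul_mem _ _ (Submodule.subset_span ?_))
      (Submodule.sum_mem _ fun i _ => Submodule.smul_mem _ _ (Submodule.subset_span ?_))
    · exact Set.mem_insert _ _
    · exact Set.mem_insert_iff.mpr (Or.inr ⟨i, rfl⟩)
  let F := Submodule.liftQ (Submodule.span ℤ S) f hsle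
  have hFsurj : Function.Surjective F := by
    intro w
    refine ⟨Submodule.Quotient.mk
      (fun i : Fin m => if h : (i : ℕ) < m - 1 then ((w ⟨i, h⟩).val : ℤ) else 0), ?_⟩
    simp only [F, Submodule.liftQ_apply]
    funext j
    rw [hf]
    rw [dif_pos (show ((⟨(j:ℕ), by omega⟩ : Fin m) : ℕ) < m - 1 from j.isLt),
      dif_neg (show ¬ ((last : ℕ) < m - 1) from by simp [last])]
    push_cast
    simp [ZMod.natCast_val, ZMod.cast_id]
  have hFinj : Function.Injective F := by
    rw [← LinearMap.ker_eq_bot]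
    exact Submodule.ker_liftQ_eq_bot _ _ _ hkerle
  exact ⟨(LinearEquiv.ofBijective F ⟨hFinj, hFsurj⟩).toAddEquiv⟩


set_option maxHeartbeats 2000000 in
lemma main_aux (n p m : ℕ) (hn1 : 1 ≤ n) (hnodd : Odd (n+1)) (hpo : Odd p)
    (hp : 0 < p) (hm : m = Nat.gcd p (n+1)) :
    Nonempty (((Fin n → ℤ) ⧸ LinearMap.range
        ((1 : Module.End ℤ (Fin n → ℤ)) + (phiA n) ^ p)) ≃+ (Fin (m-1) → ZMod 2)) := by
  classical
  have hm0 : 0 < m := hm ▸ Nat.gcd_pos_of_pos_left _ hp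
  have hmp : m ∣ p := hm ▸ Nat.gcd_dvd_left _ _
  have hmn : m ∣ n + 1 := hm ▸ Nat.gcd_dvd_right _ _
  -- the ℤ side
  set Φ : ℤ[X] := ∑ i ∈ range (n+1), X^i with hΦ
  have hΦm : Φ.Monic := monic_geom_sum_X (by omega)
  have hΦd : Φ.natDegree = n := natDegree_geomSum n
  set pb := AdjoinRoot.powerBasis' hΦm with hpb
  set B : Module.Basis (Fin n) ℤ (AdjoinRoot Φ) := pb.basis.reindex (finCongr (by rw [hpb]; exact hΦd)) with hB
  have hBpow : ∀ i : Fin n, B i = AdjoinRoot.root Φ ^ (i : ℕ) := by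
    intro i
    rw [hB, Module.Basis.reindex_apply, PowerBasis.basis_eq_pow]
    simp [hpb]
  set E : (Fin n → ℤ) ≃ₗ[ℤ] AdjoinRoot Φ := B.equivFun.symm with hE
  have hEsingle : ∀ i : Fin n, E (Pi.single i 1) = AdjoinRoot.root Φ ^ (i : ℕ) := by
    intro i
    rw [← hBpow i, hE]
    apply (LinearEquiv.symm_apply_eq _).mpr
    rw [Module.Basis.equivFun_apply, Module.Basis.repr_self]
    funext j
    simp [Finsupp.single_apply, Pi.single_apply, eq_comm]
  have hroot : ∀ v : Fin n → ℤ, E (phiA n v) = AdjoinRoot.root Φ * E v := by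
    have key : E.toLinearMap ∘ₗ (phiA n)
        = (LinearMap.mulLeft ℤ (AdjoinRoot.root Φ)) ∘ₗ E.toLinearMap := by
      apply Module.Basis.ext (Pi.basisFun ℤ (Fin n))
      intro i
      simp only [LinearMap.coe_comp, Function.comp_apply, LinearEquiv.coe_coe,
        LinearMap.mulLeft_apply]
      rw [phiA, Module.Basis.constr_basis, Pi.basisFun_apply, hEsingle]
      split_ifs with h
      · rw [hEsingle, pow_succ]; ring
      · have hi : (i:ℕ) = n - 1 := by have := i.isLt; omega
        have hfun : (fun _ : Fin n => (-1:ℤ)) = - ∑ j : Fin n, Pi.single j (1:ℤ) := by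
          funext x
          simp [Finset.sum_apply, Pi.single_apply]
        rw [hfun, map_neg, map_sum]
        have hsumE : ∑ j : Fin n, E (Pi.single j 1) = ∑ j ∈ range n, AdjoinRoot.root Φ ^ j := by
          rw [Finset.sum_congr rfl fun j _ => hEsingle j]
          exact Fin.sum_univ_eq_sum_range (fun j => AdjoinRoot.root Φ ^ j) n
        rw [hsumE]
        have hsum : ∑ i ∈ range (n+1), AdjoinRoot.root Φ ^ i = 0 := by
          calc ∑ i ∈ range (n+1), AdjoinRoot.root Φ ^ i
              = (aeval (AdjoinRoot.root Φ)) Φ := by rw [hΦ]; simp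
            _ = 0 := by rw [AdjoinRoot.aeval_eq, AdjoinRoot.mk_self]
        rw [Finset.sum_range_succ] at hsum
        have hn' : (i:ℕ) + 1 = n := by omega
        have hps : AdjoinRoot.root Φ * AdjoinRoot.root Φ ^ (i:ℕ) = AdjoinRoot.root Φ ^ n := by
          rw [← pow_succ', hn']
        rw [hps]
        linear_combination -hsum
    intro v
    have := LinearMap.congr_fun key v
    simpa using this
  have hrootpow : ∀ (q : ℕ) (v : Fin n → ℤ),
      E ((phiA n ^ q) v) = AdjoinRoot.root Φ ^ q * E v := by
    intro q
    induction q with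
    | zero => intro v; simp
    | succ q ih =>
      intro v
      rw [pow_succ, Module.End.mul_apply, ih, hroot, pow_succ]
      ring
  set cc : AdjoinRoot Φ := 1 + AdjoinRoot.root Φ ^ p with hcc
  have hmap : Submodule.map (E : (Fin n → ℤ) →ₗ[ℤ] AdjoinRoot Φ)
      (LinearMap.range (1 + phiA n ^ p)) = (Ideal.span {cc}).restrictScalars ℤ := by
    ext x
    simp only [Submodule.mem_map, LinearMap.mem_range, Submodule.restrictScalars_mem,
      Ideal.mem_span_singleton']
    constructor
    · rintro ⟨y, ⟨v, rfl⟩, rfl⟩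
      refine ⟨E v, ?_⟩
      rw [LinearMap.add_apply, Module.End.one_apply, map_add]
      simp only [LinearEquiv.coe_coe]
      rw [hrootpow, hcc]
      ring
    · rintro ⟨a, rfl⟩
      obtain ⟨v, rfl⟩ := E.surjective a
      exact ⟨(1 + phiA n ^ p) v, ⟨v, rfl⟩, by
        rw [LinearMap.add_apply, Module.End.one_apply, map_add]
        simp only [LinearEquiv.coe_coe]
        rw [hrootpow, hcc]; ring⟩
  let e1 := Submodule.Quotient.equiv _ ((Ideal.span {cc}).restrictScalars ℤ) E hmap
  let e2 := Submodule.Quotient.restrictScalarsEquiv ℤ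
    ((Ideal.span {cc}) : Submodule (AdjoinRoot Φ) (AdjoinRoot Φ))
  -- now the ring-level chain
  set I0 : Ideal ℤ[X] := Ideal.span {Φ, 1 + X^p} with hI0
  have hJmap : (Ideal.span {1 + (X:ℤ[X])^p}).map (Ideal.Quotient.mk (Ideal.span {Φ}))
      = Ideal.span {cc} := by
    rw [Ideal.map_span, Set.image_singleton]
    congr 1
  let e3a : ((AdjoinRoot Φ) ⧸ (Ideal.span {cc} : Ideal (AdjoinRoot Φ))) ≃+*
      ((ℤ[X] ⧸ Ideal.span {Φ}) ⧸ (Ideal.span {1 + (X:ℤ[X])^p}).map (Ideal.Quotient.mk (Ideal.span {Φ}))) :=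
    @Ideal.quotEquivOfEq (AdjoinRoot Φ) _ _ _ _ ⟨fun b ha ↦ by rw [mul_comm]; exact Ideal.mul_mem_left _ _ ha⟩ (hJmap.symm)
  let e3b := DoubleQuot.quotQuotEquivQuotSup (Ideal.span {Φ}) (Ideal.span {1 + (X:ℤ[X])^p})
  have hsup : Ideal.span {Φ} ⊔ Ideal.span {1 + (X:ℤ[X])^p} = I0 := by
    rw [hI0, Ideal.span_insert]
  let e3c : (ℤ[X] ⧸ (Ideal.span {Φ} ⊔ Ideal.span {1 + (X:ℤ[X])^p})) ≃+* (ℤ[X] ⧸ I0) :=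
    Ideal.quotEquivOfEq hsup
  have hAodd : Odd ((n+1)/m) := by
    obtain ⟨A, hA⟩ := hmn
    rw [hA, Nat.mul_div_cancel_left _ hm0]
    exact (Nat.odd_mul.mp (hA ▸ hnodd)).2
  have hEe : p * ((n+1)/m) = (n+1) * (p/m) := by
    obtain ⟨A, hA⟩ := hmn
    obtain ⟨s, hs⟩ := hmp
    rw [hA, hs, Nat.mul_div_cancel_left _ hm0, Nat.mul_div_cancel_left _ hm0]
    ring
  have h2I : (2:ℤ[X]) ∈ I0 := by
    have hd1 : (1 + (X:ℤ[X])^p) ∣ (1 + X^(p * ((n+1)/m))) := by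
      have hdd := Odd.add_dvd_pow_add_pow ((X:ℤ[X])^p) 1 hAodd
      rw [one_pow, ← pow_mul, add_comm ((X:ℤ[X])^p) 1,
        add_comm ((X:ℤ[X])^(p*((n+1)/m))) 1] at hdd
      exact hdd
    have hd2 : Φ ∣ ((X:ℤ[X])^(p * ((n+1)/m)) - 1) := by
      have h1 : Φ ∣ ((X:ℤ[X])^(n+1) - 1) := ⟨X - 1, (geom_sum_mul X (n+1)).symm⟩
      exact h1.trans (by rw [hEe]; exact dvd_pow_sub_one ⟨p/m, rfl⟩)
    obtain ⟨u, hu⟩ := hd1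
    obtain ⟨w, hw⟩ := hd2
    have h2eq : (2:ℤ[X]) = (1 + X^p)*u - Φ*w := by rw [← hu, ← hw]; ring
    rw [h2eq]
    exact sub_mem (Ideal.mul_mem_right _ _ (Ideal.subset_span (by simp)))
      (Ideal.mul_mem_right _ _ (Ideal.subset_span (by simp)))
  haveI : Fact (Nat.Prime 2) := ⟨Nat.prime_two⟩
  set Φ₂ : (ZMod 2)[X] := ∑ i ∈ range (n+1), X^i with hΦ₂
  set h₂ : (ZMod 2)[X] := 1 + X^p with hh₂
  set J : Ideal (ZMod 2)[X] := Ideal.span {Φ₂, h₂} with hJ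
  set π : ℤ[X] →+* (ZMod 2)[X] := Polynomial.mapRingHom (Int.castRingHom (ZMod 2)) with hπ
  have hπs : Function.Surjective π := Polynomial.map_surjective _ (ZMod.ringHom_surjective _)
  have hπΦ : π Φ = Φ₂ := by
    rw [hΦ, hΦ₂, hπ]
    simp only [coe_mapRingHom, Polynomial.map_sum, Polynomial.map_pow, Polynomial.map_X]
  have hπh : π (1 + X^p) = h₂ := by
    rw [hh₂, hπ]
    simp only [coe_mapRingHom, Polynomial.map_add, Polynomial.map_one, Polynomial.map_pow,
      Polynomial.map_X]
  have hπI : Ideal.map π I0 = J := by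
    rw [hI0, hJ, Ideal.map_span, Set.image_insert_eq, Set.image_singleton, hπΦ, hπh]
  set σ := (Ideal.Quotient.mk J).comp π with hσ
  have hσs : Function.Surjective σ := Ideal.Quotient.mk_surjective.comp hπs
  have hkerπ : RingHom.ker π ≤ I0 := by
    rw [hπ, Polynomial.ker_mapRingHom, ZMod.ker_intCastRingHom, Ideal.map_span,
      Set.image_singleton]
    refine Ideal.span_le.mpr ?_
    intro x hx
    simp only [Set.mem_singleton_iff] at hx
    subst hx
    have : (Polynomial.C ((2:ℕ):ℤ) : ℤ[X]) = 2 := by push_cast; rfl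
    rw [this]
    exact h2I
  have hkerσ : RingHom.ker σ = I0 := by
    rw [hσ, ← RingHom.comap_ker, Ideal.mk_ker, ← hπI,
      Ideal.comap_map_of_surjective π hπs, ← RingHom.ker_eq_comap_bot]
    exact sup_eq_left.mpr hkerπ
  let e4 : (ℤ[X] ⧸ I0) ≃+* ((ZMod 2)[X] ⧸ J) :=
    (Ideal.quotEquivOfEq hkerσ.symm).trans (RingHom.quotientKerEquivOfSurjective hσs)
  set g : (ZMod 2)[X] := ∑ i ∈ range m, X^i with hg
  have hgm : g.Monic := monic_geom_sum_X (by omega)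
  have hgd : g.natDegree = m - 1 := by
    have hmm : m - 1 + 1 = m := by omega
    rw [hg, ← hmm]
    exact natDegree_geomSum _
  have h2K : (2 : ZMod 2) = 0 := rfl
  have h20 : (2 : (ZMod 2)[X]) = 0 := by
    rw [(map_ofNat (Polynomial.C : ZMod 2 →+* (ZMod 2)[X]) 2).symm, h2K, Polynomial.C_0]
  have hneg1 : (-1 : (ZMod 2)[X]) = 1 := by
    rw [neg_eq_iff_add_eq_zero, one_add_one_eq_two, h20]
  have hchar : ((X:(ZMod 2)[X])^p - 1) = h₂ := by
    rw [hh₂, sub_eq_add_neg, hneg1, add_comm]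
  have hXg : ((X:(ZMod 2)[X]) - 1) * g = X^m - 1 := mul_geom_sum _ _
  have hXΦ : ((X:(ZMod 2)[X]) - 1) * Φ₂ = X^(n+1) - 1 := mul_geom_sum _ _
  have hX1 : ((X:(ZMod 2)[X]) - 1) ≠ 0 := by
    rw [show (1 : (ZMod 2)[X]) = Polynomial.C 1 from Polynomial.C_1.symm]
    exact Polynomial.X_sub_C_ne_zero 1
  have hgJ : J = Ideal.span {g} := by
    rw [hJ, ← EuclideanDomain.span_gcd, Ideal.span_singleton_eq_span_singleton]
    have hgΦ : g ∣ Φ₂ := by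
      refine (mul_dvd_mul_iff_left hX1).mp ?_
      rw [hXg, hXΦ]
      exact dvd_pow_sub_one hmn
    have hgh : g ∣ h₂ := by
      refine Dvd.dvd.trans (Dvd.intro_left _ hXg) ?_
      rw [← hchar]
      exact dvd_pow_sub_one hmp
    have hgd' : g ∣ EuclideanDomain.gcd Φ₂ h₂ := EuclideanDomain.dvd_gcd hgΦ hgh
    have hdΦ := EuclideanDomain.gcd_dvd_left Φ₂ h₂
    have hdh := EuclideanDomain.gcd_dvd_right Φ₂ h₂
    have hdn : EuclideanDomain.gcd Φ₂ h₂ ∣ (X:(ZMod 2)[X])^(n+1) - 1 :=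
      hdΦ.trans ⟨X - 1, by rw [mul_comm]; exact hXΦ.symm⟩
    have hdp : EuclideanDomain.gcd Φ₂ h₂ ∣ (X:(ZMod 2)[X])^p - 1 := by
      rw [hchar]; exact hdh
    have hdm : EuclideanDomain.gcd Φ₂ h₂ ∣ (X:(ZMod 2)[X])^m - 1 := by
      have := dvd_pow_gcd_sub_one (n+1) p hdn hdp
      rwa [Nat.gcd_comm, ← hm] at this
    have hev : Polynomial.eval 1 Φ₂ = 1 := by
      rw [hΦ₂]
      simp only [Polynomial.eval_finset_sum, Polynomial.eval_pow, Polynomial.eval_X, one_pow,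
        Finset.sum_const, Finset.card_range, nsmul_eq_mul, mul_one]
      rw [show ((n+1 : ℕ) : ZMod 2) = (((n+1) % 2 : ℕ) : ZMod 2) from (ZMod.natCast_mod _ _).symm,
        Nat.odd_iff.mp hnodd]
      exact Nat.cast_one
    have hnd : ¬ ((X:(ZMod 2)[X]) - Polynomial.C 1 ∣ EuclideanDomain.gcd Φ₂ h₂) := by
      intro hdvd
      have hroot1 : Polynomial.IsRoot Φ₂ 1 :=
        Polynomial.dvd_iff_isRoot.mp (hdvd.trans hdΦ)
      rw [Polynomial.IsRoot, hev] at hroot1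
      exact one_ne_zero hroot1
    have hco : IsCoprime ((X:(ZMod 2)[X]) - Polynomial.C 1) (EuclideanDomain.gcd Φ₂ h₂) :=
      (Polynomial.irreducible_X_sub_C (1 : ZMod 2)).coprime_iff_not_dvd.mpr hnd
    have hdg : EuclideanDomain.gcd Φ₂ h₂ ∣ g := by
      refine hco.symm.dvd_of_dvd_mul_left ?_
      rw [show Polynomial.C (1 : ZMod 2) = (1 : (ZMod 2)[X]) from Polynomial.C_1, hXg]
      exact hdm
    exact associated_of_dvd_dvd hdg hgd'
  let e5 : ((ZMod 2)[X] ⧸ J) ≃+* ((ZMod 2)[X] ⧸ Ideal.span {g}) := Ideal.quotEquivOfEq hgJ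
  let pb2 := AdjoinRoot.powerBasis' hgm
  let B2 : Module.Basis (Fin (m-1)) (ZMod 2) (AdjoinRoot g) :=
    pb2.basis.reindex (finCongr (by exact hgd))
  let e6 : ((ZMod 2)[X] ⧸ Ideal.span {g}) ≃ₗ[ZMod 2] (Fin (m-1) → ZMod 2) := B2.equivFun
  exact ⟨e1.toAddEquiv.trans (e2.toAddEquiv.trans (e3a.toAddEquiv.trans (e3b.toAddEquiv.trans
    (e3c.toAddEquiv.trans (e4.toAddEquiv.trans (e5.toAddEquiv.trans e6.toAddEquiv))))))⟩




theorem stmt14 (n p k m a b t c : ℕ) (hn : Even n) (hn1 : 1 ≤ n) (hp : 0 < p)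
    (hple : p ≤ n + 1) (hpo : Odd p)
    (hp1 : ¬ p ≡ 1 [MOD 2 * (n + 1)]) (hpm1 : ¬ p ≡ 2 * n + 1 [MOD 2 * (n + 1)])
    (hk : 0 < k) (hkp : k ≤ p) (hcong : 2 * (n + 1) ≡ k [MOD p])
    (hm : m = Nat.gcd p k) (hab : n = a * m + b) (hb : b < m)
    (hc1 : 1 ≤ c) (hc2 : c ≤ m) (htc : n + 1 - p = t * m + c) :
    (Even (p / m) →
      (Even a → Nonempty
        (((Fin n → ℤ) ⧸ LinearMap.range
            ((1 : Module.End ℤ (Fin n → ℤ)) + (phiA n) ^ p)) ≃+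
          ((Fin m → ℤ) ⧸ Submodule.span ℤ
            ({((-1 : ℤ)) ^ t • Pi.single (⟨c - 1, by omega⟩ : Fin m) (1 : ℤ) -
              fun j : Fin m => if (j : ℕ) + 1 ≤ b then 1 else 0} : Set (Fin m → ℤ))))) ∧
      (Odd a → Nonempty
        (((Fin n → ℤ) ⧸ LinearMap.range
            ((1 : Module.End ℤ (Fin n → ℤ)) + (phiA n) ^ p)) ≃+
          ((Fin m → ℤ) ⧸ Submodule.span ℤ
            ({((-1 : ℤ)) ^ t • Pi.single (⟨c - 1, by omega⟩ : Fin m) (1 : ℤ) -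
              fun j : Fin m => if b + 1 ≤ (j : ℕ) + 1 then 1 else 0} : Set (Fin m → ℤ)))))) ∧
    (Odd (p / m) →
      (Even a → Nonempty
        (((Fin n → ℤ) ⧸ LinearMap.range
            ((1 : Module.End ℤ (Fin n → ℤ)) + (phiA n) ^ p)) ≃+
          ((Fin m → ℤ) ⧸ Submodule.span ℤ
            (insert
              (((-1 : ℤ)) ^ t • Pi.single (⟨c - 1, by omega⟩ : Fin m) (1 : ℤ) -
                fun j : Fin m => if (j : ℕ) + 1 ≤ b then 1 else 0)
              (Set.range fun j : Fin m => (2 : ℤ) • Pi.single j (1 : ℤ)))))) ∧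
      (Odd a → Nonempty
        (((Fin n → ℤ) ⧸ LinearMap.range
            ((1 : Module.End ℤ (Fin n → ℤ)) + (phiA n) ^ p)) ≃+
          ((Fin m → ℤ) ⧸ Submodule.span ℤ
            (insert
              (((-1 : ℤ)) ^ t • Pi.single (⟨c - 1, by omega⟩ : Fin m) (1 : ℤ) -
                fun j : Fin m => if b + 1 ≤ (j : ℕ) + 1 then 1 else 0)
              (Set.range fun j : Fin m => (2 : ℤ) • Pi.single j (1 : ℤ))))))) := by

  -- m = gcd p (n+1)
  have hmg : m = Nat.gcd p (n + 1) := by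
    have h1 : Nat.gcd p k = Nat.gcd p (2 * (n + 1)) := by
      rw [Nat.gcd_rec p k, Nat.gcd_rec p (2 * (n+1))]
      rw [show k % p = (2 * (n+1)) % p from hcong.symm]
    have h2 : Nat.gcd p (2 * (n + 1)) = Nat.gcd p (n + 1) :=
      Nat.Coprime.gcd_mul_left_cancel_right _ (Nat.coprime_two_left.mpr hpo)
    rw [hm, h1, h2]
  have hnodd : Odd (n + 1) := by
    obtain ⟨w, hw⟩ := hn; exact ⟨w, by omega⟩
  have hm0 : 0 < m := hmg ▸ Nat.gcd_pos_of_pos_left _ hp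
  have hmp : m ∣ p := hmg ▸ Nat.gcd_dvd_left _ _
  have hmn : m ∣ n + 1 := hmg ▸ Nat.gcd_dvd_right _ _
  have hmodd : Odd m := by
    have h1 : n + 1 = m * ((n+1)/m) := (Nat.mul_div_cancel' hmn).symm
    exact (Nat.odd_mul.mp (h1 ▸ hnodd)).1
  have hs : p = m * (p / m) := (Nat.mul_div_cancel' hmp).symm
  have hsodd : Odd (p / m) := (Nat.odd_mul.mp (hs ▸ hpo)).2
  have hplt : p < n + 1 := by
    rcases Nat.lt_or_ge p (n+1) with h | h
    · exact h
    · exfalso; have : n + 1 - p = 0 := by omega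
      omega
  -- b = m - 1
  have hbm : b = m - 1 := by
    obtain ⟨A, hA⟩ := hmn
    have hmam : m ∣ a * m := ⟨a, mul_comm _ _⟩
    have hd : m ∣ b + 1 := by
      have h1 : m ∣ a * m + (b + 1) := ⟨A, by omega⟩
      exact (Nat.dvd_add_right hmam).mp h1
    have := Nat.le_of_dvd (by omega) hd
    omega
  have haeven : Even a := by
    have hn2 : n + 1 = (a + 1) * m := by rw [hab, hbm]; ring_nf; omega
    have := (Nat.odd_mul.mp (hn2 ▸ hnodd)).1
    rcases this with ⟨w, hw⟩
    exact ⟨w, by omega⟩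
  have hcm : c = m := by
    have hd : m ∣ n + 1 - p := Nat.dvd_sub hmn hmp
    rw [htc] at hd
    have hmtm : m ∣ t * m := ⟨t, mul_comm _ _⟩
    have hdc : m ∣ c := (Nat.dvd_add_right hmtm).mp hd
    have := Nat.le_of_dvd (by omega) hdc
    omega
  have htodd : Odd t := by
    have h1 : (t + 1) * m = (a + 1) * m - (p/m) * m := by
      rw [← mul_comm m (p/m), ← hs]
      have hn2 : n + 1 = (a + 1) * m := by rw [hab, hbm]; ring_nf; omega
      rw [← hn2, htc, hcm]; ring_nf
    rw [← Nat.sub_mul] at h1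
    have h2 : t + 1 = a + 1 - p/m := Nat.eq_of_mul_eq_mul_right hm0 h1
    obtain ⟨α, hα⟩ := haeven
    obtain ⟨σ, hσ⟩ := hsodd
    have hple' : p/m ≤ a := by omega
    rw [Nat.odd_iff]; omega
  constructor
  · intro hEv
    exact absurd hsodd (Nat.not_odd_iff_even.mpr hEv)
  · intro _
    constructor
    · intro _
      have hrel : ((-1 : ℤ)) ^ t • Pi.single (⟨c - 1, by omega⟩ : Fin m) (1 : ℤ) -
          (fun j : Fin m => if (j : ℕ) + 1 ≤ b then (1:ℤ) else 0) = fun _ : Fin m => (-1:ℤ) := by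
        funext j
        rw [Odd.neg_one_pow htodd]
        simp only [Pi.sub_apply, Pi.smul_apply, smul_eq_mul, Pi.single_apply]
        have hjm := j.isLt
        split_ifs with h1 h2 h2
        · exfalso
          have hv := congrArg Fin.val h1
          simp only at hv
          omega
        · norm_num
        · norm_num
        · exfalso
          have hv : (j:ℕ) ≠ c - 1 := fun hh => h1 (Fin.ext hh)
          omega
      rw [hrel]
      obtain ⟨e⟩ := main_aux n p m hn1 hnodd hpo hp hmg
      obtain ⟨f⟩ := target_aux m hm0
      exact ⟨e.trans f.symm⟩
    · intro hOdd
      exact absurd haeven (Nat.not_even_iff_odd.mpr hOdd)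
end

section
/- Suppose p, q ≥ 1 are integers with p ≡ q (mod 2(n−1)). Then Im(1 + (−1)^{p+1} ψ^p) = Im(1 + (−1)^{q+1} ψ^q), and hence H_{n,p} ≅ H_{n,q} as abelian groups. -/
/-- The class of the `i`-th indecomposable projective module over the linearly oriented
quiver of type `D_n` (vertices `0, 1, …, n-1`), written in the basis `e_0, …, e_{n-1}` of
classes of simple modules: `π_i = e_i + e_2 + ⋯ + e_{n-1}` for `i ∈ {0,1}` and
`π_i = e_i + e_{i+1} + ⋯ + e_{n-1}` for `2 ≤ i ≤ n-1`. -/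
def piD (n : ℕ) (i : Fin n) : Fin n → ℤ :=
  if (i : ℕ) ≤ 1 then fun j => if j = i ∨ 2 ≤ (j : ℕ) then 1 else 0
  else fun j => if (i : ℕ) ≤ (j : ℕ) then 1 else 0

/-- The class of the `i`-th indecomposable injective module:
`ι_i = e_i` for `i ∈ {0,1}` and `ι_i = e_0 + e_1 + ⋯ + e_i` for `2 ≤ i ≤ n-1`. -/
def iotaD (n : ℕ) (i : Fin n) : Fin n → ℤ :=
  if (i : ℕ) ≤ 1 then Pi.single i 1
  else fun j => if (j : ℕ) ≤ (i : ℕ) then 1 else 0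
namespace Stmt16Aux

def ee (n j : ℕ) : Fin n → ℤ := fun i => if (i : ℕ) = j then 1 else 0
def vv (n a b : ℕ) : Fin n → ℤ := fun i => if a ≤ (i:ℕ) ∧ (i:ℕ) ≤ b then 1 else 0
def uu (n : ℕ) : Fin n → ℤ := fun _ => 1

section
variable (n : ℕ) (hn : 3 ≤ n) (ψ : Module.End ℤ (Fin n → ℤ))
  (hψ : ∀ i, ψ (piD n i) = - iotaD n i)

include hn hψ

-- ψ e_j = e_{j+1} for 2 ≤ j ≤ n-2
lemma step_mid (j : ℕ) (h2 : 2 ≤ j) (hj : j + 1 ≤ n - 1) :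
    ψ (ee n j) = ee n (j+1) := by
  have h1 : ee n j = piD n ⟨j, by omega⟩ - piD n ⟨j+1, by omega⟩ := by
    funext x; have hx := x.2
    simp only [ee, piD, Pi.sub_apply, Fin.ext_iff, apply_ite (fun f : Fin n → ℤ => f x)]
    split_ifs <;> omega
  rw [h1, map_sub, hψ, hψ]
  funext x; have hx := x.2
  simp only [ee, iotaD, Pi.sub_apply, Pi.neg_apply, Fin.ext_iff,
    apply_ite (fun f : Fin n → ℤ => f x), Pi.single_apply]
  split_ifs <;> omega

-- ψ e_{n-1} = -u
lemma step_top : ψ (ee n (n-1)) = - uu n := by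
  have h1 : ee n (n-1) = piD n ⟨n-1, by omega⟩ := by
    funext x; have hx := x.2
    simp only [ee, piD, Fin.ext_iff, apply_ite (fun f : Fin n → ℤ => f x)]
    split_ifs <;> omega
  rw [h1, hψ]
  funext x; have hx := x.2
  simp only [uu, iotaD, Pi.neg_apply, Fin.ext_iff,
    apply_ite (fun f : Fin n → ℤ => f x), Pi.single_apply]
  split_ifs <;> omega

-- ψ u = e_2
lemma step_u : ψ (uu n) = ee n 2 := by
  have h1 : uu n = piD n ⟨0, by omega⟩ + piD n ⟨1, by omega⟩ - piD n ⟨2, by omega⟩ := by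
    funext x; have hx := x.2
    simp only [uu, piD, Pi.sub_apply, Pi.add_apply, Fin.ext_iff,
      apply_ite (fun f : Fin n → ℤ => f x)]
    split_ifs <;> omega
  rw [h1, map_sub, map_add, hψ, hψ, hψ]
  funext x; have hx := x.2
  simp only [ee, iotaD, Pi.sub_apply, Pi.add_apply, Pi.neg_apply, Fin.ext_iff,
    apply_ite (fun f : Fin n → ℤ => f x), Pi.single_apply]
  split_ifs <;> omega

-- ψ e_0 = e_1 + e_2, ψ e_1 = e_0 + e_2
lemma step_e0 : ψ (ee n 0) = ee n 1 + ee n 2 := by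
  have h1 : ee n 0 = piD n ⟨0, by omega⟩ - piD n ⟨2, by omega⟩ := by
    funext x; have hx := x.2
    simp only [ee, piD, Pi.sub_apply, Fin.ext_iff, apply_ite (fun f : Fin n → ℤ => f x)]
    split_ifs <;> omega
  rw [h1, map_sub, hψ, hψ]
  funext x; have hx := x.2
  simp only [ee, iotaD, Pi.sub_apply, Pi.add_apply, Pi.neg_apply, Fin.ext_iff,
    apply_ite (fun f : Fin n → ℤ => f x), Pi.single_apply]
  split_ifs <;> omega

lemma step_e1 : ψ (ee n 1) = ee n 0 + ee n 2 := by
  have h1 : ee n 1 = piD n ⟨1, by omega⟩ - piD n ⟨2, by omega⟩ := by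
    funext x; have hx := x.2
    simp only [ee, piD, Pi.sub_apply, Fin.ext_iff, apply_ite (fun f : Fin n → ℤ => f x)]
    split_ifs <;> omega
  rw [h1, map_sub, hψ, hψ]
  funext x; have hx := x.2
  simp only [ee, iotaD, Pi.sub_apply, Pi.add_apply, Pi.neg_apply, Fin.ext_iff,
    apply_ite (fun f : Fin n → ℤ => f x), Pi.single_apply]
  split_ifs <;> omega

-- ψ (vv a b) = vv (a+1) (b+1) for 2 ≤ a ≤ b ≤ n-2
lemma step_vv (a b : ℕ) (h2 : 2 ≤ a) (hab : a ≤ b) (hb : b ≤ n - 2) :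
    ψ (vv n a b) = vv n (a+1) (b+1) := by
  have h1 : vv n a b = piD n ⟨a, by omega⟩ - piD n ⟨b+1, by omega⟩ := by
    funext x; have hx := x.2
    simp only [vv, piD, Pi.sub_apply, Fin.ext_iff, apply_ite (fun f : Fin n → ℤ => f x)]
    split_ifs <;> omega
  rw [h1, map_sub, hψ, hψ]
  funext x; have hx := x.2
  simp only [vv, iotaD, Pi.sub_apply, Pi.neg_apply, Fin.ext_iff,
    apply_ite (fun f : Fin n → ℤ => f x), Pi.single_apply]
  split_ifs <;> omega

-- ψ (vv 2 (n-1)) = -(e_0 + e_1 + e_2)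
lemma step_vvfull : ψ (vv n 2 (n-1)) = -(ee n 0 + ee n 1 + ee n 2) := by
  have h1 : vv n 2 (n-1) = piD n ⟨2, by omega⟩ := by
    funext x; have hx := x.2
    simp only [vv, piD, Fin.ext_iff, apply_ite (fun f : Fin n → ℤ => f x)]
    split_ifs <;> omega
  rw [h1, hψ]
  funext x; have hx := x.2
  simp only [ee, iotaD, Pi.add_apply, Pi.neg_apply, Fin.ext_iff,
    apply_ite (fun f : Fin n → ℤ => f x), Pi.single_apply]
  split_ifs <;> omega

-- ψ^k e_2 = e_{k+2} for k ≤ n-3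
lemma pow_e2 : ∀ k, k ≤ n - 3 → (ψ ^ k) (ee n 2) = ee n (k + 2) := by
  intro k
  induction k with
  | zero => intro _; simp
  | succ k ih =>
    intro hk
    rw [pow_succ', Module.End.mul_apply, ih (by omega),
      step_mid n hn ψ hψ (k+2) (by omega) (by omega)]

-- ψ^(n-1) e_2 = -e_2
lemma pow_e2_top : (ψ ^ (n - 1)) (ee n 2) = -(ee n 2) := by
  have h : n - 1 = (n - 3) + 1 + 1 := by omega
  rw [h, pow_succ', pow_succ', Module.End.mul_apply, Module.End.mul_apply,
    pow_e2 n hn ψ hψ (n-3) le_rfl]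
  have h2 : n - 3 + 2 = n - 1 := by omega
  rw [h2, step_top n hn ψ hψ, map_neg, step_u n hn ψ hψ]

-- ψ^(n-1) e_j = -e_j for 2 ≤ j ≤ n-1
lemma pow_ej_top (j : ℕ) (h2 : 2 ≤ j) (hj : j ≤ n - 1) :
    (ψ ^ (n - 1)) (ee n j) = -(ee n j) := by
  have he : ee n j = (ψ ^ (j - 2)) (ee n 2) := by
    rw [pow_e2 n hn ψ hψ (j-2) (by omega), show j - 2 + 2 = j from by omega]
  have hcomm : ψ ^ (n-1) * ψ ^ (j-2) = ψ ^ (j-2) * ψ ^ (n-1) := by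
    rw [← pow_add, ← pow_add, Nat.add_comm]
  calc (ψ ^ (n - 1)) (ee n j) = (ψ ^ (n-1) * ψ ^ (j-2)) (ee n 2) := by
        rw [Module.End.mul_apply, ← he]
    _ = (ψ ^ (j-2)) ((ψ ^ (n-1)) (ee n 2)) := by rw [hcomm, Module.End.mul_apply]
    _ = -(ee n j) := by rw [pow_e2_top n hn ψ hψ, map_neg, ← he]

-- ψ^k (e_0 + e_1) = e_0 + e_1 + vv 2 (k+1) + vv 2 (k+1) for 1 ≤ k ≤ n-2
lemma pow_s : ∀ k, 1 ≤ k → k ≤ n - 2 →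
    (ψ ^ k) (ee n 0 + ee n 1) = ee n 0 + ee n 1 + vv n 2 (k+1) + vv n 2 (k+1) := by
  intro k
  induction k with
  | zero => omega
  | succ k ih =>
    intro _ hk
    have hvee : ∀ m, 2 ≤ m → ee n 2 + vv n 3 m = vv n 2 m := by
      intro m hm; funext x
      simp only [ee, vv, Pi.add_apply]
      split_ifs <;> omega
    rcases Nat.eq_or_lt_of_le (show 1 ≤ k + 1 from by omega) with h1 | h1
    · -- k = 0 : base case
      have hk0 : k = 0 := by omega
      subst hk0
      rw [pow_one, map_add, step_e0 n hn ψ hψ, step_e1 n hn ψ hψ,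
        ← hvee 2 (by omega)]
      have hv32 : vv n 3 2 = 0 := by
        funext x; simp only [vv, Pi.zero_apply]; split_ifs <;> omega
      rw [hv32]; abel
    · have hk1 : 1 ≤ k := by omega
      rw [pow_succ', Module.End.mul_apply, ih hk1 (by omega), map_add, map_add, map_add,
        step_e0 n hn ψ hψ, step_e1 n hn ψ hψ,
        step_vv n hn ψ hψ 2 (k+1) (by omega) (by omega) (by omega)]
      rw [show (2:ℕ) + 1 = 3 from rfl, ← hvee (k+1+1) (by omega)]
      abel

-- ψ^(n-1) (e_0 + e_1) = -(e_0 + e_1)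
lemma pow_s_top : (ψ ^ (n - 1)) (ee n 0 + ee n 1) = -(ee n 0 + ee n 1) := by
  have h : n - 1 = (n - 2) + 1 := by omega
  rw [h, pow_succ', Module.End.mul_apply, pow_s n hn ψ hψ (n-2) (by omega) le_rfl]
  have h2 : n - 2 + 1 = n - 1 := by omega
  rw [h2, map_add, map_add, map_add, step_e0 n hn ψ hψ, step_e1 n hn ψ hψ,
    step_vvfull n hn ψ hψ]
  abel

-- ψ (e_0 - e_1) = -(e_0 - e_1)
lemma step_d : ψ (ee n 0 - ee n 1) = -(ee n 0 - ee n 1) := by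
  rw [map_sub, step_e0 n hn ψ hψ, step_e1 n hn ψ hψ]; abel

-- ψ^(2k) (e_0 - e_1) = e_0 - e_1
lemma pow_d : ∀ k, (ψ ^ (2 * k)) (ee n 0 - ee n 1) = ee n 0 - ee n 1 := by
  intro k
  induction k with
  | zero => simp
  | succ k ih =>
    have h : 2 * (k + 1) = 2 * k + 1 + 1 := by ring
    rw [h, pow_succ, pow_succ, Module.End.mul_apply, Module.End.mul_apply,
      step_d n hn ψ hψ, map_neg, step_d n hn ψ hψ, neg_neg, ih]

-- the key: ψ^(2(n-1)) = 1
lemma pow_coxeter : ψ ^ (2 * (n - 1)) = 1 := by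
  have hh : 2 * (n - 1) = (n - 1) + (n - 1) := by ring
  -- on e_j, j ≥ 2
  have hej : ∀ j : ℕ, 2 ≤ j → j ≤ n - 1 → (ψ ^ (2 * (n-1))) (ee n j) = ee n j := by
    intro j h2 hj
    rw [hh, pow_add, Module.End.mul_apply, pow_ej_top n hn ψ hψ j h2 hj, map_neg,
      pow_ej_top n hn ψ hψ j h2 hj, neg_neg]
  have hs : (ψ ^ (2 * (n-1))) (ee n 0 + ee n 1) = ee n 0 + ee n 1 := by
    rw [hh, pow_add, Module.End.mul_apply, pow_s_top n hn ψ hψ, map_neg,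
      pow_s_top n hn ψ hψ, neg_neg]
  have hd : (ψ ^ (2 * (n-1))) (ee n 0 - ee n 1) = ee n 0 - ee n 1 :=
    pow_d n hn ψ hψ (n-1)
  have he0 : (ψ ^ (2 * (n-1))) (ee n 0) = ee n 0 := by
    have h2 : (ψ ^ (2 * (n-1))) (ee n 0) + (ψ ^ (2 * (n-1))) (ee n 0)
        = ee n 0 + ee n 0 := by
      have h3 : ee n 0 + ee n 0 = (ee n 0 + ee n 1) + (ee n 0 - ee n 1) := by abel
      rw [← map_add, h3, map_add, hs, hd]
    funext x
    have := congrFun h2 x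
    simp only [Pi.add_apply] at this
    omega
  have he1 : (ψ ^ (2 * (n-1))) (ee n 1) = ee n 1 := by
    have h2 : (ψ ^ (2 * (n-1))) (ee n 1) + (ψ ^ (2 * (n-1))) (ee n 1)
        = ee n 1 + ee n 1 := by
      have h3 : ee n 1 + ee n 1 = (ee n 0 + ee n 1) - (ee n 0 - ee n 1) := by abel
      rw [← map_add, h3, map_sub, hs, hd]
    funext x
    have := congrFun h2 x
    simp only [Pi.add_apply] at this
    omega
  -- conclude on the standard basis
  apply Module.Basis.ext (Pi.basisFun ℤ (Fin n))
  intro i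
  have hsingle : (Pi.basisFun ℤ (Fin n)) i = ee n (i : ℕ) := by
    funext x
    simp [ee, Pi.basisFun_apply, Pi.single_apply, Fin.ext_iff]
  rw [hsingle, Module.End.one_apply]
  rcases Nat.lt_or_ge (i : ℕ) 2 with hi | hi
  · have h01 : (i : ℕ) = 0 ∨ (i : ℕ) = 1 := by omega
    rcases h01 with h0 | h0 <;> rw [h0]
    · exact he0
    · exact he1
  · exact hej (i : ℕ) hi (by have := i.2; omega)

end
end Stmt16Aux

theorem stmt16 (n : ℕ) (hn : 3 ≤ n) (ψ : Module.End ℤ (Fin n → ℤ))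
    (hψ : ∀ i, ψ (piD n i) = - iotaD n i)
    (p q : ℕ) (hp : 1 ≤ p) (hq : 1 ≤ q) (hpq : p ≡ q [MOD 2 * (n - 1)]) :
    LinearMap.range ((1 : Module.End ℤ (Fin n → ℤ)) + ((-1 : ℤ)) ^ (p + 1) • ψ ^ p)
      = LinearMap.range ((1 : Module.End ℤ (Fin n → ℤ)) + ((-1 : ℤ)) ^ (q + 1) • ψ ^ q) ∧
    Nonempty
      (((Fin n → ℤ) ⧸ LinearMap.range
          ((1 : Module.End ℤ (Fin n → ℤ)) + ((-1 : ℤ)) ^ (p + 1) • ψ ^ p)) ≃+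
        ((Fin n → ℤ) ⧸ LinearMap.range
          ((1 : Module.End ℤ (Fin n → ℤ)) + ((-1 : ℤ)) ^ (q + 1) • ψ ^ q))) := by
  have hkey := Stmt16Aux.pow_coxeter n hn ψ hψ
  have hmod : ∀ m : ℕ, ψ ^ m = ψ ^ (m % (2*(n-1))) := by
    intro m
    conv_lhs => rw [← Nat.div_add_mod m (2*(n-1))]
    rw [pow_add, pow_mul, hkey, one_pow, one_mul]
  have hpq' : p % (2*(n-1)) = q % (2*(n-1)) := hpq
  have hpow : ψ ^ p = ψ ^ q := by rw [hmod p, hmod q, hpq']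
  have hpar : p % 2 = q % 2 := Nat.ModEq.of_dvd ⟨n-1, rfl⟩ hpq
  have hsign : ((-1 : ℤ)) ^ (p+1) = (-1) ^ (q+1) := by
    rcases Nat.even_or_odd (p+1) with he | ho
    · have h2 : Even (q+1) := by rw [Nat.even_iff] at he ⊢; omega
      rw [he.neg_one_pow, h2.neg_one_pow]
    · have h2 : Odd (q+1) := by rw [Nat.odd_iff] at ho ⊢; omega
      rw [ho.neg_one_pow, h2.neg_one_pow]
  have heq : (1 : Module.End ℤ (Fin n → ℤ)) + ((-1:ℤ))^(p+1) • ψ^p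
      = 1 + ((-1:ℤ))^(q+1) • ψ^q := by rw [hsign, hpow]
  refine ⟨by rw [heq], ?_⟩
  rw [heq]
  exact ⟨AddEquiv.refl _⟩
end

section
/- Suppose p ≥ 1 satisfies p ≡ 0 (mod 2(n−1)). Then 1 − ψ^p is the zero endomorphism of ℤ^n, and hence H_{n,p} = ℤ^n / Im(1 − ψ^p) is isomorphic to ℤ^n. -/
noncomputable def EV (n k : ℕ) (h : k < n) : Fin n → ℤ := Pi.single (⟨k, h⟩ : Fin n) 1

theorem EV_congr {n a b : ℕ} (hab : a = b) (ha : a < n) (hb : b < n) :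
    EV n a ha = EV n b hb := by subst hab; rfl

section
variable {n : ℕ} {ψ : Module.End ℤ (Fin n → ℤ)}

theorem hmid (hn : 3 ≤ n) (hψ : ∀ i, ψ (piD n i) = - iotaD n i)
    (k : ℕ) (h2 : 2 ≤ k) (h : k + 1 < n) :
    ψ (EV n k (by omega)) = EV n (k+1) h := by
  have hπ : piD n ⟨k, by omega⟩ = piD n ⟨k+1, h⟩ + EV n k (by omega) := by
    funext j
    simp only [piD, EV, Pi.add_apply, Pi.single_apply, if_neg (by omega : ¬ (k:ℕ) ≤ 1),
      if_neg (by omega : ¬ (k+1:ℕ) ≤ 1), Fin.ext_iff]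
    split_ifs <;> omega
  have hι : (- iotaD n ⟨k, by omega⟩ : Fin n → ℤ) = - iotaD n ⟨k+1, h⟩ + EV n (k+1) h := by
    funext j
    simp only [iotaD, EV, Pi.add_apply, Pi.neg_apply, Pi.single_apply,
      if_neg (by omega : ¬ (k:ℕ) ≤ 1), if_neg (by omega : ¬ (k+1:ℕ) ≤ 1), Fin.ext_iff]
    split_ifs <;> omega
  have h1 := hψ ⟨k, by omega⟩
  have h2' := hψ ⟨k+1, h⟩
  rw [hπ, map_add, h2', hι] at h1
  linear_combination (norm := module) h1

theorem hend (hn : 3 ≤ n) (hψ : ∀ i, ψ (piD n i) = - iotaD n i) (h : n - 1 < n) :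
    ψ (EV n (n-1) h) = - (fun _ => (1:ℤ)) := by
  have hπ : piD n ⟨n-1, h⟩ = EV n (n-1) h := by
    funext j
    simp only [piD, EV, Pi.single_apply, if_neg (by omega : ¬ (n-1:ℕ) ≤ 1), Fin.ext_iff]
    have := j.isLt
    split_ifs <;> omega
  have hι : iotaD n ⟨n-1, h⟩ = (fun _ => (1:ℤ)) := by
    funext j
    simp only [iotaD, if_neg (by omega : ¬ (n-1:ℕ) ≤ 1)]
    have := j.isLt
    rw [if_pos (by omega)]
  have h1 := hψ ⟨n-1, h⟩
  rw [hπ, hι] at h1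
  exact h1

theorem hsum (hn : 3 ≤ n) (hψ : ∀ i, ψ (piD n i) = - iotaD n i) :
    ψ (fun _ => (1:ℤ)) = EV n 2 (by omega) := by
  have hπ : (fun _ => (1:ℤ)) = piD n ⟨0, by omega⟩ + piD n ⟨1, by omega⟩ - piD n ⟨2, by omega⟩ := by
    funext j
    simp only [piD, Pi.add_apply, Pi.sub_apply, if_pos (by omega : (0:ℕ) ≤ 1),
      if_pos (by omega : (1:ℕ) ≤ 1), if_neg (by omega : ¬ (2:ℕ) ≤ 1), Fin.ext_iff]
    split_ifs <;> omega
  have hι : - iotaD n ⟨0, by omega⟩ + - iotaD n ⟨1, by omega⟩ - - iotaD n ⟨2, by omega⟩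
      = EV n 2 (by omega) := by
    funext j
    simp only [iotaD, EV, Pi.add_apply, Pi.sub_apply, Pi.neg_apply, Pi.single_apply,
      if_pos (by omega : (0:ℕ) ≤ 1), if_pos (by omega : (1:ℕ) ≤ 1),
      if_neg (by omega : ¬ (2:ℕ) ≤ 1), Fin.ext_iff]
    split_ifs <;> omega
  rw [hπ, map_sub, map_add, hψ, hψ, hψ, hι]

theorem h01 (hn : 3 ≤ n) (hψ : ∀ i, ψ (piD n i) = - iotaD n i) (i : ℕ) (hi : i ≤ 1) :
    ψ (EV n i (by omega)) = EV n (1-i) (by omega) + EV n 2 (by omega) := by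
  have hπ : piD n ⟨i, by omega⟩ = piD n ⟨2, by omega⟩ + EV n i (by omega) := by
    funext j
    simp only [piD, EV, Pi.add_apply, Pi.single_apply, if_pos hi,
      if_neg (by omega : ¬ (2:ℕ) ≤ 1), Fin.ext_iff]
    split_ifs <;> omega
  have hι : (- iotaD n ⟨i, by omega⟩ : Fin n → ℤ) + - EV n (1-i) (by omega)
      - - iotaD n ⟨2, by omega⟩ - EV n 2 (by omega) = 0 := by
    funext j
    simp only [iotaD, EV, Pi.add_apply, Pi.sub_apply, Pi.neg_apply, Pi.single_apply,
      Pi.zero_apply, if_pos hi, if_neg (by omega : ¬ (2:ℕ) ≤ 1), Fin.ext_iff]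
    split_ifs <;> omega
  have h1 := hψ ⟨i, by omega⟩
  have h2 := hψ ⟨2, by omega⟩
  rw [hπ, map_add, h2] at h1
  have e1 : ψ (EV n i (by omega)) = - iotaD n ⟨i, by omega⟩ + iotaD n ⟨2, by omega⟩ := by
    linear_combination (norm := module) h1
  rw [e1]
  linear_combination (norm := module) hι

end

section
variable {n : ℕ} {ψ : Module.End ℤ (Fin n → ℤ)}

theorem fix_pow {M : Type*} [AddCommGroup M] [Module ℤ M] (f : Module.End ℤ M) (x : M)
    (h : f x = x) (m : ℕ) : (f ^ m) x = x := by
  induction m with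
  | zero => simp
  | succ m ih => rw [pow_succ, Module.End.mul_apply, h, ih]

theorem orbit (hn : 3 ≤ n) (hψ : ∀ i, ψ (piD n i) = - iotaD n i)
    (k : ℕ) (h : 2 + k < n) :
    (ψ ^ k) (EV n 2 (by omega)) = EV n (2+k) h := by
  induction k with
  | zero => simp [EV]
  | succ k ih =>
    rw [pow_succ', Module.End.mul_apply, ih (by omega)]
    exact hmid hn hψ (2+k) (by omega) h

end

section
variable {n : ℕ} {ψ : Module.End ℤ (Fin n → ℤ)}

theorem hneg2 (hn : 3 ≤ n) (hψ : ∀ i, ψ (piD n i) = - iotaD n i) :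
    (ψ ^ (n-1)) (EV n 2 (by omega)) = - EV n 2 (by omega) := by
  have e1 : ψ ^ (n-1) = ψ * (ψ * ψ ^ (n-3)) := by
    rw [← pow_succ', ← pow_succ']
    congr 1
    omega
  rw [e1, Module.End.mul_apply, Module.End.mul_apply, orbit hn hψ (n-3) (by omega)]
  rw [EV_congr (by omega : 2+(n-3) = n-1) (by omega) (by omega),
    hend hn hψ (by omega), map_neg, hsum hn hψ]

theorem hnegk (hn : 3 ≤ n) (hψ : ∀ i, ψ (piD n i) = - iotaD n i)
    (k : ℕ) (h2 : 2 ≤ k) (h : k < n) :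
    (ψ ^ (n-1)) (EV n k h) = - EV n k h := by
  have e0 : EV n k h = (ψ ^ (k-2)) (EV n 2 (by omega)) := by
    rw [orbit hn hψ (k-2) (by omega)]
    exact EV_congr (by omega) _ _
  rw [e0, ← Module.End.mul_apply, ← pow_add, show n-1+(k-2) = k-2+(n-1) by omega, pow_add,
    Module.End.mul_apply, hneg2 hn hψ, map_neg]

end

section
variable {n : ℕ} {ψ : Module.End ℤ (Fin n → ℤ)}

theorem hv_pow (hn : 3 ≤ n) (hψ : ∀ i, ψ (piD n i) = - iotaD n i) (k : ℕ) :
    (ψ ^ k) (EV n 0 (by omega) + EV n 1 (by omega))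
      = (EV n 0 (by omega) + EV n 1 (by omega))
        + 2 • (Finset.range k).sum (fun j => (ψ ^ j) (EV n 2 (by omega))) := by
  induction k with
  | zero => simp
  | succ k ih =>
    rw [pow_succ', Module.End.mul_apply, ih, map_add, map_nsmul, map_sum]
    have hv : ψ (EV n 0 (by omega) + EV n 1 (by omega))
        = (EV n 0 (by omega) + EV n 1 (by omega)) + 2 • EV n 2 (by omega) := by
      rw [map_add, h01 hn hψ 0 (by omega), h01 hn hψ 1 (by omega)]
      show EV n 1 _ + EV n 2 _ + (EV n 0 _ + EV n 2 _) = _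
      rw [two_smul]
      abel
    rw [hv]
    have hshift : ∀ j, ψ ((ψ ^ j) (EV n 2 (by omega : 2 < n)))
        = (ψ ^ (j+1)) (EV n 2 (by omega)) := by
      intro j
      rw [← Module.End.mul_apply, ← pow_succ']
    simp only [hshift]
    rw [Finset.sum_range_succ' (fun j => (ψ ^ j) (EV n 2 (by omega : 2 < n)))]
    rw [pow_zero, Module.End.one_apply, smul_add]
    abel

theorem hv_fix (hn : 3 ≤ n) (hψ : ∀ i, ψ (piD n i) = - iotaD n i) :
    (ψ ^ (2*(n-1))) (EV n 0 (by omega) + EV n 1 (by omega))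
      = EV n 0 (by omega) + EV n 1 (by omega) := by
  have hcomm : ∀ j, (ψ ^ (n-1)) ((ψ ^ j) (EV n 2 (by omega : 2 < n)))
      = - (ψ ^ j) (EV n 2 (by omega)) := by
    intro j
    rw [← Module.End.mul_apply, ← pow_add, Nat.add_comm, pow_add, Module.End.mul_apply,
      hneg2 hn hψ, map_neg]
  rw [two_mul, pow_add, Module.End.mul_apply, hv_pow hn hψ, map_add, map_nsmul, map_sum,
    hv_pow hn hψ]
  simp only [hcomm]
  rw [Finset.sum_neg_distrib]
  abel

theorem hu_fix (hn : 3 ≤ n) (hψ : ∀ i, ψ (piD n i) = - iotaD n i) :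
    (ψ ^ (2*(n-1))) (EV n 0 (by omega) - EV n 1 (by omega))
      = EV n 0 (by omega) - EV n 1 (by omega) := by
  have h2 : (ψ ^ 2) (EV n 0 (by omega) - EV n 1 (by omega))
      = EV n 0 (by omega) - EV n 1 (by omega) := by
    have hu : ψ (EV n 0 (by omega) - EV n 1 (by omega))
        = - (EV n 0 (by omega) - EV n 1 (by omega)) := by
      rw [map_sub, h01 hn hψ 0 (by omega), h01 hn hψ 1 (by omega)]
      show EV n 1 _ + EV n 2 _ - (EV n 0 _ + EV n 2 _) = _
      abel
    rw [pow_two, Module.End.mul_apply, hu, map_neg, hu, neg_neg]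
  rw [pow_mul]
  exact fix_pow _ _ h2 (n-1)

theorem psi_cox (hn : 3 ≤ n) (hψ : ∀ i, ψ (piD n i) = - iotaD n i) :
    ψ ^ (2*(n-1)) = 1 := by
  apply LinearMap.pi_ext
  intro i x
  have hx : (Pi.single i x : Fin n → ℤ) = x • Pi.single i 1 := by
    rw [← Pi.single_smul, smul_eq_mul, mul_one]
  rw [hx, map_smul, Module.End.one_apply]
  have hE : (Pi.single i 1 : Fin n → ℤ) = EV n i.1 i.2 := rfl
  have hfix : (ψ ^ (2*(n-1))) (Pi.single i 1 : Fin n → ℤ) = Pi.single i 1 := by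
    rw [hE]
    rcases le_or_gt 2 i.1 with h2 | h2
    · rw [two_mul, pow_add, Module.End.mul_apply, hnegk hn hψ i.1 h2 i.2, map_neg,
        hnegk hn hψ i.1 h2 i.2, neg_neg]
    · apply smul_right_injective (Fin n → ℤ) (two_ne_zero : (2:ℤ) ≠ 0)
      show (2:ℤ) • _ = (2:ℤ) • _
      rw [← map_smul]
      rcases (by omega : i.1 = 0 ∨ i.1 = 1) with h | h
      · rw [EV_congr h i.2 (by omega)]
        have e : (2:ℤ) • EV n 0 (by omega : 0 < n) = (EV n 0 (by omega) + EV n 1 (by omega))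
            + (EV n 0 (by omega) - EV n 1 (by omega)) := by
          rw [two_smul]; abel
        rw [e, map_add, hv_fix hn hψ, hu_fix hn hψ]
      · rw [EV_congr h i.2 (by omega)]
        have e : (2:ℤ) • EV n 1 (by omega : 1 < n) = (EV n 0 (by omega) + EV n 1 (by omega))
            - (EV n 0 (by omega) - EV n 1 (by omega)) := by
          rw [two_smul]; abel
        rw [e, map_sub, hv_fix hn hψ, hu_fix hn hψ]
  rw [hfix]

end

theorem stmt17 (n : ℕ) (hn : 3 ≤ n) (ψ : Module.End ℤ (Fin n → ℤ))
    (hψ : ∀ i, ψ (piD n i) = - iotaD n i)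
    (p : ℕ) (hp : 1 ≤ p) (hp0 : p ≡ 0 [MOD 2 * (n - 1)]) :
    (1 : Module.End ℤ (Fin n → ℤ)) - ψ ^ p = 0 ∧
    Nonempty
      (((Fin n → ℤ) ⧸ LinearMap.range
          ((1 : Module.End ℤ (Fin n → ℤ)) - ψ ^ p)) ≃+ (Fin n → ℤ)) := by
  obtain ⟨m, hm⟩ : 2*(n-1) ∣ p := Nat.modEq_zero_iff_dvd.mp hp0
  have hpow : ψ ^ p = 1 := by rw [hm, pow_mul, psi_cox hn hψ, one_pow]
  have hz : (1 : Module.End ℤ (Fin n → ℤ)) - ψ ^ p = 0 := by rw [hpow, sub_self]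
  refine ⟨hz, ?_⟩
  rw [hz]
  exact ⟨(Submodule.quotEquivOfEqBot _ LinearMap.range_zero).toAddEquiv⟩
end
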